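/- arXiv:1205.3626 — 3 statements merged into one kernel-verified Lean document; each statement's English description precedes it below -/
import Mathlib

section
/- For real numbers 0 ≤ s ≤ r and any ε > 0, there is a constant C depending only on r and s such that the Hölder seminorm satisfies [f]_s ≤ C(ε^{r-s}[f]_r + ε^{-s}‖f‖_0) for all smooth functions f on the 3-torus. -/
set_option maxHeartbeats 1000000


open scoped BigOperators

noncomputable section

abbrev E3 := EuclideanSpace ℝ (Fin 3)

/-- Periodicity with respect to the lattice `(2πℤ)³`, i.e. `f` is a function on the 3-torus. -/
def Per3 (f : E3 → ℝ) : Prop :=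
  ∀ (x : E3) (k : Fin 3 → ℤ),
    f (x + ∑ i, (2 * Real.pi * (k i : ℝ)) • EuclideanSpace.single i (1 : ℝ)) = f x

/-- The partial derivative `D^β f` of order `m` along coordinate directions `β`. -/
def pd (m : ℕ) (f : E3 → ℝ) (β : Fin m → Fin 3) (x : E3) : ℝ :=
  iteratedFDeriv ℝ m f x (fun j => EuclideanSpace.single (β j) (1 : ℝ))

/-- The Hölder seminorm `[f]_r` with `r = m + α`, `m = ⌊r⌋`, `α = r - m`:
maximum over multiindices `β` with `|β| = m` of the `α`-Hölder seminorm of `D^β f`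
(for `α = 0`, the sup norm of `D^β f`). -/
def hSemi (f : E3 → ℝ) (r : ℝ) : ℝ :=
  if r = (⌊r⌋₊ : ℝ) then
    ⨆ (β : Fin ⌊r⌋₊ → Fin 3), ⨆ x : E3, |pd ⌊r⌋₊ f β x|
  else
    ⨆ (β : Fin ⌊r⌋₊ → Fin 3), ⨆ x : E3, ⨆ y : E3,
      |pd ⌊r⌋₊ f β x - pd ⌊r⌋₊ f β y| / ‖x - y‖ ^ (r - (⌊r⌋₊ : ℝ))

/-- The supremum norm `‖f‖₀`. -/
def supN (f : E3 → ℝ) : ℝ := ⨆ x : E3, |f x|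

namespace HolderInterp

noncomputable def ee (i : Fin 3) : E3 := EuclideanSpace.single i (1:ℝ)

lemma norm_ee (i : Fin 3) : ‖ee i‖ = 1 := by simp [ee]

lemma coord_le_norm (v : E3) (i : Fin 3) : |v i| ≤ ‖v‖ := by
  have h : |v i| = Real.sqrt ((v i)^2) := (Real.sqrt_sq_eq_abs _).symm
  rw [EuclideanSpace.norm_eq, h]
  apply Real.sqrt_le_sqrt
  have := Finset.single_le_sum (f := fun j => ‖v j‖^2) (fun j _ => sq_nonneg _)
    (Finset.mem_univ i)
  simpa [Real.norm_eq_abs, sq_abs] using this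

lemma vec_decomp (v : E3) : v = ∑ i, v i • ee i := by
  ext j
  rw [WithLp.ofLp_sum, Finset.sum_apply]
  simp [ee, EuclideanSpace.single_apply]

def lat (kv : Fin 3 → ℤ) : E3 :=
  ∑ i, (2 * Real.pi * (kv i : ℝ)) • EuclideanSpace.single i (1:ℝ)

lemma lat_apply (kv : Fin 3 → ℤ) (j : Fin 3) : lat kv j = 2 * Real.pi * (kv j : ℝ) := by
  unfold lat
  rw [WithLp.ofLp_sum, Finset.sum_apply]
  simp [EuclideanSpace.single_apply]

lemma per3_def {f : E3 → ℝ} (hp : Per3 f) (x : E3) (kv : Fin 3 → ℤ) :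
    f (x + lat kv) = f x := hp x kv

lemma fderiv_shift {F : Type*} [NormedAddCommGroup F] [NormedSpace ℝ F] (g : E3 → F)
    (hg : Differentiable ℝ g) (c x : E3) (hgp : ∀ y, g (y + c) = g y) :
    fderiv ℝ g (x + c) = fderiv ℝ g x := by
  have h2 : HasFDerivAt (fun y : E3 => y + c) (ContinuousLinearMap.id ℝ E3) x := by
    simpa using (hasFDerivAt_id x).add_const c
  have h3 := ((hg (x + c)).hasFDerivAt).comp x h2
  rw [ContinuousLinearMap.comp_id] at h3
  have he : (g ∘ fun y : E3 => y + c) = g := funext fun y => hgp y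
  rw [he] at h3
  exact (h3.fderiv).symm

lemma it_per {f : E3 → ℝ} (hf : ContDiff ℝ (⊤ : ℕ∞) f) (hp : Per3 f) (k : ℕ) (kv : Fin 3 → ℤ) :
    ∀ x : E3, iteratedFDeriv ℝ k f (x + lat kv) = iteratedFDeriv ℝ k f x := by
  induction k with
  | zero =>
    intro x; ext m
    simp only [iteratedFDeriv_zero_apply]
    exact per3_def hp x kv
  | succ k ih =>
    intro x
    have hdiff : Differentiable ℝ (iteratedFDeriv ℝ k f) :=
      hf.differentiable_iteratedFDeriv (by exact_mod_cast ENat.coe_lt_top k)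
    have hsh := fderiv_shift (iteratedFDeriv ℝ k f) hdiff (lat kv) x (fun y => ih y)
    ext m
    rw [iteratedFDeriv_succ_apply_left, iteratedFDeriv_succ_apply_left, hsh]

lemma pd_per {f : E3 → ℝ} (hf : ContDiff ℝ (⊤ : ℕ∞) f) (hp : Per3 f) (k : ℕ) (β : Fin k → Fin 3) :
    Per3 (fun x => pd k f β x) := by
  intro x kv
  show pd k f β (x + lat kv) = pd k f β x
  unfold pd
  rw [it_per hf hp k kv x]

lemma two_pi_le_seven : 2 * Real.pi ≤ 7 := by
  nlinarith [Real.pi_lt_d2]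

lemma exists_bound {g : E3 → ℝ} (hc : Continuous g) (hp : Per3 g) :
    ∃ B, 0 ≤ B ∧ ∀ x, |g x| ≤ B := by
  obtain ⟨B, hB⟩ := (isCompact_closedBall (0:E3) 13).exists_bound_of_continuousOn
    hc.continuousOn
  refine ⟨max B 0, le_max_right _ _, fun x => ?_⟩
  set kv : Fin 3 → ℤ := fun i => -⌊x i / (2 * Real.pi)⌋ with hkv
  have hmem : x + lat kv ∈ Metric.closedBall (0:E3) 13 := by
    have hcoord : ∀ j, |(x + lat kv) j| ≤ 7 := by
      intro j
      have h2pi : (0:ℝ) < 2 * Real.pi := by positivity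
      have : (x + lat kv) j = 2 * Real.pi * Int.fract (x j / (2 * Real.pi)) := by
        have : (x + lat kv) j = x j + 2 * Real.pi * (kv j : ℝ) := by
          simp [lat_apply]
        rw [this, hkv]
        simp only [Int.fract]
        push_cast
        field_simp
        ring
      have hfr : 0 ≤ Int.fract (x j / (2 * Real.pi)) := Int.fract_nonneg _
      rw [this, abs_of_nonneg (by positivity)]
      have hlt : Int.fract (x j / (2 * Real.pi)) ≤ 1 := (Int.fract_lt_one _).le
      nlinarith [two_pi_le_seven, Int.fract_nonneg (x j / (2 * Real.pi))]
    rw [Metric.mem_closedBall, dist_zero_right, EuclideanSpace.norm_eq]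
    have hsum : ∑ j, ‖(x + lat kv) j‖^2 ≤ 169 := by
      have : ∀ j : Fin 3, ‖(x + lat kv) j‖^2 ≤ 49 := by
        intro j
        have := hcoord j
        rw [Real.norm_eq_abs]
        nlinarith [abs_nonneg ((x + lat kv) j)]
      calc ∑ j, ‖(x + lat kv) j‖^2 ≤ ∑ _j : Fin 3, (49:ℝ) :=
            Finset.sum_le_sum (fun j _ => this j)
        _ ≤ 169 := by norm_num
    calc Real.sqrt (∑ j, ‖(x + lat kv) j‖^2) ≤ Real.sqrt 169 := Real.sqrt_le_sqrt hsum
      _ = 13 := by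
          rw [show (169:ℝ) = 13^2 by norm_num, Real.sqrt_sq (by norm_num)]
  have := hB _ hmem
  rw [Real.norm_eq_abs, per3_def hp x kv] at this
  exact this.trans (le_max_left _ _)

end HolderInterp
-- appended fragment (compiled as part of combined file)
namespace HolderInterp

def VV {k : ℕ} (β : Fin k → Fin 3) : Fin k → E3 := fun j => ee (β j)

lemma pd_eq {f : E3 → ℝ} {k : ℕ} (β : Fin k → Fin 3) (x : E3) :
    pd k f β x = iteratedFDeriv ℝ k f x (VV β) := rfl

lemma pd_zero (f : E3 → ℝ) (β : Fin 0 → Fin 3) (x : E3) : pd 0 f β x = f x := by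
  unfold pd; rw [iteratedFDeriv_zero_apply]

lemma pd_cont {f : E3 → ℝ} (hf : ContDiff ℝ (⊤ : ℕ∞) f) (k : ℕ) (β : Fin k → Fin 3) :
    Continuous (fun x => pd k f β x) :=
  (ContinuousMultilinearMap.apply ℝ (fun _ : Fin k => E3) ℝ (VV β)).continuous.comp
    (hf.continuous_iteratedFDeriv (by exact_mod_cast le_top))

/-- The candidate derivative of `pd k f β` at `x`. -/
def Dpd (f : E3 → ℝ) (k : ℕ) (β : Fin k → Fin 3) (x : E3) : E3 →L[ℝ] ℝ :=
  (ContinuousMultilinearMap.apply ℝ (fun _ : Fin k => E3) ℝ (VV β)).comp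
    (fderiv ℝ (iteratedFDeriv ℝ k f) x)

lemma pd_hasFDerivAt {f : E3 → ℝ} (hf : ContDiff ℝ (⊤ : ℕ∞) f) (k : ℕ) (β : Fin k → Fin 3)
    (x : E3) : HasFDerivAt (fun y => pd k f β y) (Dpd f k β x) x :=
  (ContinuousMultilinearMap.apply ℝ (fun _ : Fin k => E3) ℝ (VV β)).hasFDerivAt.comp x
    ((hf.differentiable_iteratedFDeriv (by exact_mod_cast ENat.coe_lt_top k)) x).hasFDerivAt

lemma VV_cons {k : ℕ} (i : Fin 3) (β : Fin k → Fin 3) :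
    VV (Fin.cons i β) = Fin.cons (ee i) (VV β) := by
  funext j
  refine Fin.cases ?_ (fun j' => ?_) j <;> simp [VV]

lemma VV_snoc {k : ℕ} (i : Fin 3) (β : Fin k → Fin 3) :
    VV (Fin.snoc β i) = Fin.snoc (VV β) (ee i) := by
  funext j
  refine Fin.lastCases ?_ (fun j' => ?_) j <;> simp [VV]

lemma Dpd_apply {f : E3 → ℝ} (k : ℕ) (β : Fin k → Fin 3) (x v : E3) :
    Dpd f k β x v = iteratedFDeriv ℝ (k+1) f x (Fin.cons v (VV β)) := by
  rw [iteratedFDeriv_succ_apply_left]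
  simp [Dpd]

lemma Dpd_apply_ee {f : E3 → ℝ} (k : ℕ) (β : Fin k → Fin 3) (i : Fin 3) (x : E3) :
    Dpd f k β x (ee i) = pd (k+1) f (Fin.cons i β) x := by
  rw [Dpd_apply, pd_eq, VV_cons]

end HolderInterp
namespace HolderInterp

/-- `Mn f k` : sup norm of the `k`-th coordinate derivatives. -/
def Mn (f : E3 → ℝ) (k : ℕ) : ℝ := ⨆ β : Fin k → Fin 3, ⨆ x : E3, |pd k f β x|

lemma pd_bdd {f : E3 → ℝ} (hf : ContDiff ℝ (⊤ : ℕ∞) f) (hp : Per3 f) (k : ℕ)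
    (β : Fin k → Fin 3) : ∃ B, 0 ≤ B ∧ ∀ x, |pd k f β x| ≤ B :=
  exists_bound (pd_cont hf k β) (pd_per hf hp k β)

lemma pd_ubdd {f : E3 → ℝ} (hf : ContDiff ℝ (⊤ : ℕ∞) f) (hp : Per3 f) (k : ℕ) :
    ∃ B, 0 ≤ B ∧ ∀ (β : Fin k → Fin 3) x, |pd k f β x| ≤ B := by
  choose Bb h0 hBb using pd_bdd hf hp k
  obtain ⟨B, hB⟩ := Set.Finite.bddAbove (Set.finite_range Bb)
  exact ⟨max B 0, le_max_right _ _, fun β x =>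
    (hBb β x).trans ((hB (Set.mem_range_self β)).trans (le_max_left _ _))⟩

lemma Mn_nonneg (f : E3 → ℝ) (k : ℕ) : 0 ≤ Mn f k :=
  Real.iSup_nonneg fun β => Real.iSup_nonneg fun x => abs_nonneg _

lemma le_Mn {f : E3 → ℝ} (hf : ContDiff ℝ (⊤ : ℕ∞) f) (hp : Per3 f) (k : ℕ)
    (β : Fin k → Fin 3) (x : E3) : |pd k f β x| ≤ Mn f k := by
  obtain ⟨B, hB0, hB⟩ := pd_ubdd hf hp k
  have h1 : |pd k f β x| ≤ ⨆ x, |pd k f β x| :=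
    le_ciSup ⟨B, by rintro b ⟨x', rfl⟩; exact hB β x'⟩ x
  refine h1.trans (le_ciSup (f := fun β : Fin k → Fin 3 => ⨆ x : E3, |pd k f β x|) ?_ β)
  exact ⟨B, by rintro b ⟨β', rfl⟩; exact ciSup_le (hB β')⟩

lemma Mn_le {f : E3 → ℝ} {k : ℕ} {B : ℝ}
    (hB : ∀ (β : Fin k → Fin 3) x, |pd k f β x| ≤ B) : Mn f k ≤ B :=
  ciSup_le fun β => ciSup_le fun x => hB β x

lemma norm_Dpd_le {f : E3 → ℝ} (hf : ContDiff ℝ (⊤ : ℕ∞) f) (hp : Per3 f) (k : ℕ)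
    (β : Fin k → Fin 3) (x : E3) : ‖Dpd f k β x‖ ≤ 3 * Mn f (k+1) := by
  have hM := Mn_nonneg f (k+1)
  refine ContinuousLinearMap.opNorm_le_bound _ (by linarith) fun v => ?_
  have hdec : Dpd f k β x v = ∑ i, v i * Dpd f k β x (ee i) := by
    conv_lhs => rw [vec_decomp v]
    rw [map_sum]
    congr 1; funext i; rw [map_smul]; rfl
  rw [Real.norm_eq_abs, hdec]
  calc |∑ i, v i * Dpd f k β x (ee i)| ≤ ∑ i, |v i * Dpd f k β x (ee i)| :=
        Finset.abs_sum_le_sum_abs _ _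
    _ ≤ ∑ _i : Fin 3, Mn f (k+1) * ‖v‖ := by
        refine Finset.sum_le_sum fun i _ => ?_
        rw [abs_mul, Dpd_apply_ee]
        have h1 := coord_le_norm v i
        have h2 := le_Mn hf hp (k+1) (Fin.cons i β) x
        have h3 := abs_nonneg (v i)
        have h4 := abs_nonneg (pd (k+1) f (Fin.cons i β) x)
        nlinarith
    _ = 3 * Mn f (k+1) * ‖v‖ := by
        rw [Finset.sum_const]
        simp; ring

lemma pd_lip {f : E3 → ℝ} (hf : ContDiff ℝ (⊤ : ℕ∞) f) (hp : Per3 f) (k : ℕ)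
    (β : Fin k → Fin 3) (x y : E3) :
    |pd k f β x - pd k f β y| ≤ 3 * Mn f (k+1) * ‖x - y‖ := by
  have := Convex.norm_image_sub_le_of_norm_hasFDerivWithin_le
    (f := fun y => pd k f β y) (f' := fun z => Dpd f k β z) (C := 3 * Mn f (k+1))
    (s := Set.univ)
    (fun z _ => (pd_hasFDerivAt hf k β z).hasFDerivWithinAt)
    (fun z _ => norm_Dpd_le hf hp k β z) convex_univ (Set.mem_univ y) (Set.mem_univ x)
  simpa [Real.norm_eq_abs] using this

lemma line_hasDerivAt {f : E3 → ℝ} (hf : ContDiff ℝ (⊤ : ℕ∞) f) (k : ℕ) (β : Fin k → Fin 3)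
    (i : Fin 3) (x : E3) (t : ℝ) :
    HasDerivAt (fun t : ℝ => pd k f β (x + t • ee i))
      (pd (k+1) f (Fin.cons i β) (x + t • ee i)) t := by
  have l1 : HasDerivAt (fun t : ℝ => x + t • ee i) (ee i) t := by
    simpa using ((hasDerivAt_id t).smul_const (ee i)).const_add x
  have l2 := (pd_hasFDerivAt hf k β (x + t • ee i)).comp_hasDerivAt t l1
  rw [Dpd_apply_ee] at l2
  exact l2

/-- The generic one-dimensional interpolation step. -/
lemma step {f : E3 → ℝ} (hf : ContDiff ℝ (⊤ : ℕ∞) f) (hp : Per3 f) (k : ℕ) {h : ℝ} (hh : 0 < h)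
    {R : ℝ} (hR : ∀ (β' : Fin (k+1) → Fin 3) (x y : E3), ‖x - y‖ ≤ h →
      |pd (k+1) f β' x - pd (k+1) f β' y| ≤ R) :
    Mn f (k+1) ≤ 2 * Mn f k / h + R := by
  apply Mn_le; intro γ x
  set i := γ 0 with hi
  set β := Fin.tail γ with hβ
  have hγ : γ = Fin.cons i β := (Fin.cons_self_tail γ).symm
  set g : ℝ → ℝ := fun t => pd k f β (x + t • ee i) with hg
  have hder : ∀ t, HasDerivAt g (pd (k+1) f (Fin.cons i β) (x + t • ee i)) t :=
    fun t => line_hasDerivAt hf k β i x t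
  obtain ⟨c, hc, hslope⟩ := exists_hasDerivAt_eq_slope g
    (fun t => pd (k+1) f (Fin.cons i β) (x + t • ee i)) hh
    (fun t _ => (hder t).continuousAt.continuousWithinAt) (fun t _ => hder t)
  have hdist : ‖(x + (0:ℝ) • ee i) - (x + c • ee i)‖ ≤ h := by
    rw [show (x + (0:ℝ) • ee i) - (x + c • ee i) = (0 - c) • ee i by module]
    rw [norm_smul, norm_ee]
    simp only [zero_sub, norm_neg, mul_one]
    rw [Real.norm_eq_abs, abs_of_nonneg hc.1.le]
    exact hc.2.le
  have hosc := hR (Fin.cons i β) (x + (0:ℝ) • ee i) (x + c • ee i) hdist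
  have hx0 : pd (k+1) f γ x = pd (k+1) f (Fin.cons i β) (x + (0:ℝ) • ee i) := by
    rw [← hγ]; congr 1; simp
  have hb : ∀ t : ℝ, |g t| ≤ Mn f k := fun t => le_Mn hf hp k β _
  have hsl : |pd (k+1) f (Fin.cons i β) (x + c • ee i)| ≤ 2 * Mn f k / h := by
    rw [hslope, sub_zero, abs_div, abs_of_pos hh]
    have h1 : |g h - g 0| ≤ 2 * Mn f k := by
      have := norm_sub_le (g h) (g 0)
      have h2 := hb h; have h3 := hb 0
      simp only [Real.norm_eq_abs] at this
      linarith
    gcongr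
  have hfin : pd (k+1) f (Fin.cons i β) (x + (0:ℝ) • ee i)
      = pd (k+1) f (Fin.cons i β) (x + c • ee i)
        + (pd (k+1) f (Fin.cons i β) (x + (0:ℝ) • ee i)
            - pd (k+1) f (Fin.cons i β) (x + c • ee i)) := by ring
  rw [hx0, hfin]
  exact (abs_add_le _ _).trans (add_le_add hsl hosc)

end HolderInterp
namespace HolderInterp

/-- Hölder quotient. -/
def qq (f : E3 → ℝ) (k : ℕ) (α : ℝ) (β : Fin k → Fin 3) (x y : E3) : ℝ :=
  |pd k f β x - pd k f β y| / ‖x - y‖ ^ α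

/-- Hölder seminorm of order `k + α`. -/
def Hq (f : E3 → ℝ) (k : ℕ) (α : ℝ) : ℝ := ⨆ β : Fin k → Fin 3, ⨆ x : E3, ⨆ y : E3, qq f k α β x y

lemma qq_nonneg (f : E3 → ℝ) (k : ℕ) (α : ℝ) (β : Fin k → Fin 3) (x y : E3) :
    0 ≤ qq f k α β x y :=
  div_nonneg (abs_nonneg _) (Real.rpow_nonneg (norm_nonneg _) _)

lemma Hq_nonneg (f : E3 → ℝ) (k : ℕ) (α : ℝ) : 0 ≤ Hq f k α :=
  Real.iSup_nonneg fun β => Real.iSup_nonneg fun x => Real.iSup_nonneg fun y =>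
    qq_nonneg f k α β x y

lemma qq_bound {f : E3 → ℝ} (hf : ContDiff ℝ (⊤ : ℕ∞) f) (hp : Per3 f) (k : ℕ) {α : ℝ}
    (h0 : 0 < α) (h1 : α ≤ 1) (β : Fin k → Fin 3) (x y : E3) :
    qq f k α β x y ≤ 2 * Mn f k + 3 * Mn f (k+1) := by
  have hMk := Mn_nonneg f k
  have hMk1 := Mn_nonneg f (k+1)
  rcases eq_or_ne x y with rfl | hxy
  · simp [qq]
    positivity
  · have ht : 0 < ‖x - y‖ := by
      rw [norm_pos_iff, sub_ne_zero]; exact hxy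
    have hnum : |pd k f β x - pd k f β y| ≤ 2 * Mn f k := by
      have := norm_sub_le (pd k f β x) (pd k f β y)
      simp only [Real.norm_eq_abs] at this
      have h2 := le_Mn hf hp k β x; have h3 := le_Mn hf hp k β y
      linarith
    rcases le_or_gt 1 ‖x - y‖ with hle | hlt
    · have hpow : (1:ℝ) ≤ ‖x - y‖ ^ α := by
        calc (1:ℝ) = 1 ^ α := (Real.one_rpow α).symm
          _ ≤ ‖x - y‖ ^ α := Real.rpow_le_rpow (by norm_num) hle h0.le
      have := div_le_self (abs_nonneg (pd k f β x - pd k f β y)) hpow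
      unfold qq
      linarith
    · have hnum2 : |pd k f β x - pd k f β y| ≤ 3 * Mn f (k+1) * ‖x - y‖ :=
        pd_lip hf hp k β x y
      have hpow : (0:ℝ) < ‖x - y‖ ^ α := Real.rpow_pos_of_pos ht α
      have hq1 : qq f k α β x y ≤ 3 * Mn f (k+1) * ‖x - y‖ / ‖x - y‖ ^ α := by
        unfold qq; gcongr
      have h2 : ‖x - y‖ / ‖x - y‖ ^ α = ‖x - y‖ ^ (1 - α) := by
        rw [Real.rpow_sub ht, Real.rpow_one]
      have h3 : ‖x - y‖ ^ (1 - α) ≤ 1 :=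
        Real.rpow_le_one (norm_nonneg _) hlt.le (by linarith)
      have h4 : 3 * Mn f (k+1) * ‖x - y‖ / ‖x - y‖ ^ α
          = 3 * Mn f (k+1) * (‖x - y‖ ^ (1 - α)) := by
        rw [← h2]; ring
      rw [h4] at hq1
      nlinarith

lemma le_Hq {f : E3 → ℝ} (hf : ContDiff ℝ (⊤ : ℕ∞) f) (hp : Per3 f) (k : ℕ) {α : ℝ}
    (h0 : 0 < α) (h1 : α ≤ 1) (β : Fin k → Fin 3) (x y : E3) :
    qq f k α β x y ≤ Hq f k α := by
  set B := 2 * Mn f k + 3 * Mn f (k+1) with hB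
  have hq := qq_bound hf hp k h0 h1
  have s1 : qq f k α β x y ≤ ⨆ y, qq f k α β x y :=
    le_ciSup ⟨B, by rintro b ⟨y', rfl⟩; exact hq β x y'⟩ y
  have s2 : (⨆ y, qq f k α β x y) ≤ ⨆ x, ⨆ y, qq f k α β x y := by
    refine le_ciSup (f := fun x => ⨆ y, qq f k α β x y) ⟨B, ?_⟩ x
    rintro b ⟨x', rfl⟩; exact ciSup_le (hq β x')
  have s3 : (⨆ x, ⨆ y, qq f k α β x y) ≤ Hq f k α := by
    refine le_ciSup (f := fun β => ⨆ x, ⨆ y, qq f k α β x y) ⟨B, ?_⟩ β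
    rintro b ⟨β', rfl⟩; exact ciSup_le fun x' => ciSup_le (hq β' x')
  exact (s1.trans s2).trans s3

lemma Hq_le {f : E3 → ℝ} {k : ℕ} {α : ℝ} {B : ℝ}
    (hB : ∀ (β : Fin k → Fin 3) x y, qq f k α β x y ≤ B) : Hq f k α ≤ B :=
  ciSup_le fun β => ciSup_le fun x => ciSup_le fun y => hB β x y

lemma pd_osc_holder {f : E3 → ℝ} (hf : ContDiff ℝ (⊤ : ℕ∞) f) (hp : Per3 f) (k : ℕ) {α : ℝ}
    (h0 : 0 < α) (h1 : α ≤ 1) (β : Fin k → Fin 3) (x y : E3) :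
    |pd k f β x - pd k f β y| ≤ Hq f k α * ‖x - y‖ ^ α := by
  rcases eq_or_ne x y with rfl | hxy
  · simp [Real.zero_rpow h0.ne']
  · have ht : 0 < ‖x - y‖ := by rw [norm_pos_iff, sub_ne_zero]; exact hxy
    have hpow : (0:ℝ) < ‖x - y‖ ^ α := Real.rpow_pos_of_pos ht α
    have := le_Hq hf hp k h0 h1 β x y
    unfold qq at this
    rw [div_le_iff₀ hpow] at this
    linarith

end HolderInterp
namespace HolderInterp

/-- coordinate partial derivative as a function. -/
def gg (f : E3 → ℝ) (i : Fin 3) : E3 → ℝ := fun x => pd 1 f (fun _ => i) x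

lemma gg_eq (f : E3 → ℝ) (i : Fin 3) (x : E3) : gg f i x = fderiv ℝ f x (ee i) := by
  unfold gg pd
  rw [iteratedFDeriv_one_apply]
  rfl

lemma gg_contDiff {f : E3 → ℝ} (hf : ContDiff ℝ (⊤ : ℕ∞) f) (i : Fin 3) :
    ContDiff ℝ (⊤ : ℕ∞) (gg f i) := by
  have h1 : ContDiff ℝ (⊤ : ℕ∞) (fderiv ℝ f) := hf.fderiv_right (by simp)
  have : gg f i = fun x => (fderiv ℝ f x) (ee i) := funext fun x => gg_eq f i x
  rw [this]
  exact h1.clm_apply contDiff_const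

lemma gg_per {f : E3 → ℝ} (hf : ContDiff ℝ (⊤ : ℕ∞) f) (hp : Per3 f) (i : Fin 3) :
    Per3 (gg f i) := pd_per hf hp 1 (fun _ => i)

lemma pd_peel {f : E3 → ℝ} (hf : ContDiff ℝ (⊤ : ℕ∞) f) (k : ℕ) (β : Fin k → Fin 3) (i : Fin 3)
    (x : E3) : pd k (gg f i) β x = pd (k+1) f (Fin.snoc β i) x := by
  have hfd : ContDiff ℝ (⊤ : ℕ∞) (fderiv ℝ f) := hf.fderiv_right (by simp)
  set A : (E3 →L[ℝ] ℝ) →L[ℝ] ℝ := ContinuousLinearMap.apply ℝ ℝ (ee i) with hA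
  have hgg : gg f i = A ∘ (fderiv ℝ f) := by
    funext x; rw [gg_eq]; rfl
  have hcomp := A.iteratedFDeriv_comp_left (hfd.contDiffAt (x := x)) (i := k) (by exact_mod_cast le_top)
  rw [pd_eq, hgg, hcomp]
  have : iteratedFDeriv ℝ (k+1) f x (VV (Fin.snoc β i))
      = iteratedFDeriv ℝ k (fderiv ℝ f) x (VV β) (ee i) := by
    rw [VV_snoc, iteratedFDeriv_succ_apply_right]
    simp
  rw [pd_eq, this]
  rfl

/-- sup norm facts -/
lemma supN_eq_Mn0 (f : E3 → ℝ) : supN f = Mn f 0 := by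
  have h : Mn f 0 = ⨆ x : E3, |f x| := by
    unfold Mn
    rw [ciSup_unique]
    exact iSup_congr fun x => by rw [pd_zero]
  rw [h]; rfl

lemma supN_nonneg (f : E3 → ℝ) : 0 ≤ supN f :=
  Real.iSup_nonneg fun x => abs_nonneg _

/-- hSemi bridges -/
lemma hSemi_nat (f : E3 → ℝ) (k : ℕ) : hSemi f (k : ℝ) = Mn f k := by
  unfold hSemi
  rw [if_pos (by rw [Nat.floor_natCast])]
  show Mn f ⌊(k:ℝ)⌋₊ = Mn f k
  rw [Nat.floor_natCast]

lemma hSemi_frac {f : E3 → ℝ} {r : ℝ} (h : r ≠ (⌊r⌋₊ : ℝ)) :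
    hSemi f r = Hq f ⌊r⌋₊ (r - ⌊r⌋₊) := by
  unfold hSemi
  rw [if_neg h]
  rfl

lemma hSemi_nonneg (f : E3 → ℝ) (r : ℝ) : 0 ≤ hSemi f r := by
  unfold hSemi
  split
  · exact Real.iSup_nonneg fun β => Real.iSup_nonneg fun x => abs_nonneg _
  · exact Real.iSup_nonneg fun β => Real.iSup_nonneg fun x => Real.iSup_nonneg fun y =>
      div_nonneg (abs_nonneg _) (Real.rpow_nonneg (norm_nonneg _) _)

end HolderInterp
namespace HolderInterp

lemma hSemi_int {f : E3 → ℝ} {σ : ℝ} (h : σ = (⌊σ⌋₊ : ℝ)) :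
    hSemi f σ = Mn f ⌊σ⌋₊ := by
  unfold hSemi; rw [if_pos h]; rfl

section peel

variable {f : E3 → ℝ} {σ : ℝ}

lemma floor_facts (hσ : 1 ≤ σ) :
    ∃ n' : ℕ, ⌊σ⌋₊ = n' + 1 ∧ ⌊σ - 1⌋₊ = n' ∧ ((⌊σ⌋₊ : ℝ) = (n' : ℝ) + 1) := by
  have hpos : 1 ≤ ⌊σ⌋₊ := Nat.le_floor (by exact_mod_cast hσ)
  refine ⟨⌊σ⌋₊ - 1, (Nat.succ_pred_eq_of_pos hpos).symm, ?_, ?_⟩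
  · rw [Nat.floor_sub_one]
  · push_cast [Nat.cast_sub hpos]
    ring

lemma hSemi_peel_le (hf : ContDiff ℝ (⊤ : ℕ∞) f) (hp : Per3 f) (hσ : 1 ≤ σ) (i : Fin 3) : hSemi (gg f i) (σ - 1) ≤ hSemi f σ := by
  obtain ⟨n', hn1, hn2, hn3⟩ := floor_facts hσ
  have hσ0 : 0 ≤ σ := by linarith
  by_cases hint : σ = (⌊σ⌋₊ : ℝ)
  · have hint' : σ - 1 = (⌊σ - 1⌋₊ : ℝ) := by rw [hn2]; rw [hint, hn3]; ring
    rw [hSemi_int hint, hSemi_int hint', hn1, hn2]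
    refine Mn_le fun β x => ?_
    rw [pd_peel hf n' β i x]
    exact le_Mn hf hp (n'+1) _ x
  · have hα0 : 0 < σ - ⌊σ⌋₊ :=
      lt_of_le_of_ne (by linarith [Nat.floor_le hσ0]) (fun hc => hint (by linarith))
    have hα1 : σ - ⌊σ⌋₊ ≤ 1 := by
      have := Nat.lt_floor_add_one σ
      linarith
    have hint' : σ - 1 ≠ (⌊σ - 1⌋₊ : ℝ) := by
      rw [hn2]
      intro hc
      exact hint (by rw [hn3]; linarith)
    rw [hSemi_frac hint', hSemi_frac hint, hn2, hn1]
    have hexp : σ - 1 - (n' : ℝ) = σ - (⌊σ⌋₊ : ℝ) := by rw [hn3]; ring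
    have hcast : ((n' + 1 : ℕ) : ℝ) = ((⌊σ⌋₊ : ℕ) : ℝ) := by rw [hn1]
    rw [hexp, hcast]
    refine Hq_le fun β x y => ?_
    have hq : qq (gg f i) n' (σ - ⌊σ⌋₊) β x y
        = qq f (n'+1) (σ - ⌊σ⌋₊) (Fin.snoc β i) x y := by
      unfold qq
      rw [pd_peel hf n' β i x, pd_peel hf n' β i y]
    rw [hq]
    exact le_Hq hf hp (n'+1) hα0 hα1 (Fin.snoc β i) x y

lemma hSemi_peel_ge (hf : ContDiff ℝ (⊤ : ℕ∞) f) (hp : Per3 f) (hσ : 1 ≤ σ) {B : ℝ} (hB : ∀ i, hSemi (gg f i) (σ - 1) ≤ B) :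
    hSemi f σ ≤ B := by
  obtain ⟨n', hn1, hn2, hn3⟩ := floor_facts hσ
  have hσ0 : 0 ≤ σ := by linarith
  by_cases hint : σ = (⌊σ⌋₊ : ℝ)
  · have hint' : σ - 1 = (⌊σ - 1⌋₊ : ℝ) := by rw [hn2]; rw [hint, hn3]; ring
    rw [hSemi_int hint, hn1]
    refine Mn_le fun β x => ?_
    have hβ : β = Fin.snoc (Fin.init β) (β (Fin.last n')) := (Fin.snoc_init_self β).symm
    rw [hβ, ← pd_peel hf n' (Fin.init β) (β (Fin.last n')) x]
    refine le_trans (le_Mn (gg_contDiff hf _) (gg_per hf hp _) n' _ x) ?_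
    have := hB (β (Fin.last n'))
    rw [hSemi_int hint', hn2] at this
    exact this
  · have hα0 : 0 < σ - ⌊σ⌋₊ :=
      lt_of_le_of_ne (by linarith [Nat.floor_le hσ0]) (fun hc => hint (by linarith))
    have hα1 : σ - ⌊σ⌋₊ ≤ 1 := by
      have := Nat.lt_floor_add_one σ
      linarith
    have hint' : σ - 1 ≠ (⌊σ - 1⌋₊ : ℝ) := by
      rw [hn2]
      intro hc
      exact hint (by rw [hn3]; linarith)
    rw [hSemi_frac hint, hn1]
    have hcast : ((n' + 1 : ℕ) : ℝ) = ((⌊σ⌋₊ : ℕ) : ℝ) := by rw [hn1]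
    rw [hcast]
    refine Hq_le fun β x y => ?_
    have hβ : β = Fin.snoc (Fin.init β) (β (Fin.last n')) := (Fin.snoc_init_self β).symm
    set i := β (Fin.last n')
    have hq : qq f (n'+1) (σ - ⌊σ⌋₊) β x y
        = qq (gg f i) n' (σ - ⌊σ⌋₊) (Fin.init β) x y := by
      unfold qq
      rw [pd_peel hf n' (Fin.init β) i x, pd_peel hf n' (Fin.init β) i y, ← hβ]
    rw [hq]
    refine le_trans (le_Hq (gg_contDiff hf _) (gg_per hf hp _) n' hα0 hα1 _ x y) ?_
    have := hB i
    rw [hSemi_frac hint', hn2] at this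
    have hexp : σ - 1 - (n' : ℝ) = σ - (⌊σ⌋₊ : ℝ) := by rw [hn3]; ring
    rw [hexp] at this
    exact this

end peel

end HolderInterp
namespace HolderInterp

/-- The conclusion of the interpolation inequality, as a predicate. -/
def Good (r s C : ℝ) : Prop :=
  ∀ ε : ℝ, 0 < ε → ∀ f : E3 → ℝ, ContDiff ℝ (⊤ : ℕ∞) f → Per3 f →
    hSemi f s ≤ C * (ε ^ (r - s) * hSemi f r + ε ^ (-s) * supN f)

lemma Mn_peel_le {f : E3 → ℝ} (hf : ContDiff ℝ (⊤ : ℕ∞) f) (hp : Per3 f) (i : Fin 3) (k : ℕ) :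
    Mn (gg f i) k ≤ Mn f (k+1) :=
  Mn_le fun β x => by rw [pd_peel hf k β i x]; exact le_Mn hf hp (k+1) _ x

lemma cast2 : ((2:ℕ) : ℝ) = (2:ℝ) := by norm_num
lemma cast1 : ((1:ℕ) : ℝ) = (1:ℝ) := by norm_num

lemma hSemi_one (f : E3 → ℝ) : hSemi f 1 = Mn f 1 := by
  rw [← cast1, hSemi_nat]

lemma hSemi_two (f : E3 → ℝ) : hSemi f 2 = Mn f 2 := by
  rw [← cast2, hSemi_nat]

lemma rpow_neg_one' {ε : ℝ} (hε : 0 < ε) : ε ^ (-1 : ℝ) = ε⁻¹ := by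
  rw [show (-1 : ℝ) = -(1:ℝ) by norm_num, Real.rpow_neg hε.le, Real.rpow_one]

/-- Gradient estimate: interpolation for `Mn f 1`. -/
lemma grad_interp {r : ℝ} (hr : 1 ≤ r)
    (IH : ∀ r' s' : ℝ, ⌊r'⌋₊ < ⌊r⌋₊ → 0 ≤ s' → s' ≤ r' → ∃ C, 0 < C ∧ Good r' s' C) :
    ∃ C, 0 < C ∧ ∀ ε : ℝ, 0 < ε → ∀ f : E3 → ℝ, ContDiff ℝ (⊤ : ℕ∞) f → Per3 f →
      Mn f 1 ≤ C * (ε ^ (r - 1) * hSemi f r + ε ^ (-1 : ℝ) * supN f) := by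
  rcases eq_or_lt_of_le hr with heq | hlt
  · -- r = 1
    refine ⟨1, one_pos, fun ε hε f hf hp => ?_⟩
    rw [← heq]
    have h1 : (1:ℝ) - 1 = 0 := by norm_num
    rw [h1, Real.rpow_zero, hSemi_one]
    have h2 : 0 ≤ ε ^ (-1:ℝ) * supN f :=
      mul_nonneg (Real.rpow_nonneg hε.le _) (supN_nonneg f)
    linarith
  rcases lt_or_ge r 2 with hr2 | hr2
  · -- 1 < r < 2
    refine ⟨2, two_pos, fun ε hε f hf hp => ?_⟩
    have hfl : ⌊r⌋₊ = 1 := by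
      rw [Nat.floor_eq_iff (by linarith)]
      refine ⟨by exact_mod_cast hr, by push_cast; linarith⟩
    have hint : r ≠ (⌊r⌋₊ : ℝ) := by rw [hfl]; push_cast; linarith
    have hHS : hSemi f r = Hq f 1 (r - 1) := by
      rw [hSemi_frac hint, hfl, cast1]
    have hα0 : (0:ℝ) < r - 1 := by linarith
    have hα1 : r - 1 ≤ 1 := by linarith
    have hstep := step hf hp 0 hε (R := Hq f 1 (r-1) * ε ^ (r-1)) ?hR
    case hR =>
      intro β' x y hxy
      refine (pd_osc_holder hf hp 1 hα0 hα1 β' x y).trans ?_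
      have := Real.rpow_le_rpow (norm_nonneg (x - y)) hxy hα0.le
      have hHq := Hq_nonneg f 1 (r-1)
      nlinarith
    rw [← supN_eq_Mn0] at hstep
    rw [hHS, rpow_neg_one' hε]
    have hdiv : 2 * supN f / ε = 2 * (ε⁻¹ * supN f) := by rw [div_eq_mul_inv]; ring
    have hHq := Hq_nonneg f 1 (r-1)
    have hpow : 0 ≤ ε ^ (r-1) := Real.rpow_nonneg hε.le _
    rw [hdiv] at hstep
    nlinarith
  · -- 2 ≤ r
    have hfl2 : 2 ≤ ⌊r⌋₊ := Nat.le_floor (by exact_mod_cast hr2)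
    have hfl' : ⌊r - 1⌋₊ = ⌊r⌋₊ - 1 := Nat.floor_sub_one r
    have hlt' : ⌊r - 1⌋₊ < ⌊r⌋₊ := by omega
    obtain ⟨C₁, hC₁pos, hC₁⟩ := IH (r-1) 1 hlt' (by norm_num) (by linarith)
    refine ⟨24 * C₁ + 1, by linarith, fun ε hε f hf hp => ?_⟩
    set H := hSemi f r with hH
    have hHnn : 0 ≤ H := hSemi_nonneg f r
    have hSnn : 0 ≤ supN f := supN_nonneg f
    have hM1nn : 0 ≤ Mn f 1 := Mn_nonneg f 1
    have hM2nn : 0 ≤ Mn f 2 := Mn_nonneg f 2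
    have hεinv : 0 < ε⁻¹ := inv_pos.mpr hε
    have hprm2 : 0 ≤ ε ^ (r-2) := Real.rpow_nonneg hε.le _
    have hprm1 : 0 ≤ ε ^ (r-1) := Real.rpow_nonneg hε.le _
    -- Step A: Mn f 2 ≤ C₁ (ε^(r-2) H + ε⁻¹ Mn f 1)
    have key2 : Mn f 2 ≤ C₁ * (ε ^ (r-2) * H + ε⁻¹ * Mn f 1) := by
      rw [← hSemi_two]
      refine hSemi_peel_ge hf hp (by norm_num) fun i => ?_
      have h21 : (2:ℝ) - 1 = 1 := by norm_num
      rw [h21]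
      have happ := hC₁ ε hε (gg f i) (gg_contDiff hf i) (gg_per hf hp i)
      have hpe1 : hSemi (gg f i) (r - 1) ≤ H := hSemi_peel_le hf hp hr i
      have hpe2 : supN (gg f i) ≤ Mn f 1 := by
        rw [supN_eq_Mn0]; exact Mn_peel_le hf hp i 0
      have hexp : (r - 1) - 1 = r - 2 := by ring
      rw [hexp, rpow_neg_one' hε] at happ
      refine happ.trans ?_
      gcongr <;> first
        | exact hpe1
        | exact hpe2
        | linarith
    -- Step B: one-dimensional step with h = ε/(6 C₁)
    set h0 : ℝ := ε / (6 * C₁) with hh0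
    have hh0pos : 0 < h0 := by positivity
    have hstep := step hf hp 0 hh0pos (R := 3 * Mn f 2 * h0) ?hR
    case hR =>
      intro β' x y hxy
      refine (pd_lip hf hp 1 β' x y).trans ?_
      have h3 : 0 ≤ 3 * Mn f 2 := by linarith
      nlinarith [norm_nonneg (x - y)]
    rw [← supN_eq_Mn0] at hstep
    -- arithmetic
    have hee : ε * ε⁻¹ = 1 := mul_inv_cancel₀ hε.ne'
    have hrr : ε ^ (r-2) * ε = ε ^ (r-1) := by
      rw [show r - 1 = (r-2) + 1 by ring, Real.rpow_add hε, Real.rpow_one]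
    have hdiv : 2 * supN f / h0 = 12 * C₁ * (ε⁻¹ * supN f) := by
      rw [hh0]
      field_simp
      ring
    have hc1 : 3 * h0 * C₁ = ε / 2 := by rw [hh0]; field_simp; ring
    have chain : Mn f 1 ≤ 12 * C₁ * (ε⁻¹ * supN f)
        + (3 * h0 * C₁) * (ε ^ (r-2) * H + ε⁻¹ * Mn f 1) := by
      have h1 : 3 * Mn f 2 * h0 ≤ (3 * h0 * C₁) * (ε ^ (r-2) * H + ε⁻¹ * Mn f 1) := by
        nlinarith
      rw [hdiv] at hstep
      linarith
    have hx : (3 * h0 * C₁) * (ε ^ (r-2) * H + ε⁻¹ * Mn f 1)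
        = ε ^ (r-1) * H / 2 + Mn f 1 / 2 := by
      rw [hc1]
      have expand : (ε/2) * (ε ^ (r-2) * H + ε⁻¹ * Mn f 1)
          = (ε ^ (r-2) * ε) * H / 2 + (ε * ε⁻¹) * (Mn f 1) / 2 := by ring
      rw [expand, hrr, hee]
      ring
    rw [hx] at chain
    have final : Mn f 1 ≤ 24 * C₁ * (ε⁻¹ * supN f) + ε ^ (r-1) * H := by linarith
    rw [rpow_neg_one' hε]
    have e1 : 0 ≤ ε ^ (r-1) * H := mul_nonneg hprm1 hHnn
    have e2 : 0 ≤ ε⁻¹ * supN f := mul_nonneg hεinv.le hSnn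
    nlinarith [mul_nonneg hC₁pos.le e1]

end HolderInterp
namespace HolderInterp

lemma le_supN {f : E3 → ℝ} (hf : ContDiff ℝ (⊤ : ℕ∞) f) (hp : Per3 f) (x : E3) :
    |f x| ≤ supN f := by
  have h := le_Mn hf hp 0 (fun j => j.elim0) x
  rw [pd_zero] at h
  rw [supN_eq_Mn0]
  exact h

lemma hSemi_small {f : E3 → ℝ} {s : ℝ} (h0 : 0 < s) (h1 : s < 1) :
    hSemi f s = Hq f 0 s := by
  have hfl : ⌊s⌋₊ = 0 := Nat.floor_eq_zero.mpr h1
  have hne : s ≠ (⌊s⌋₊ : ℝ) := by rw [hfl]; push_cast; linarith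
  rw [hSemi_frac hne, hfl]
  norm_num

lemma hSemi_zero {f : E3 → ℝ} : hSemi f 0 = supN f := by
  rw [show (0:ℝ) = ((0:ℕ):ℝ) by norm_num, hSemi_nat, ← supN_eq_Mn0]

theorem main_ind : ∀ n : ℕ, ∀ r s : ℝ, ⌊r⌋₊ = n → 0 ≤ s → s ≤ r →
    ∃ C, 0 < C ∧ Good r s C := by
  intro n
  induction n using Nat.strong_induction_on with
  | _ n IH =>
  intro r s hn hs hsr
  have hr0 : 0 ≤ r := le_trans hs hsr
  have IH' : ∀ r' s' : ℝ, ⌊r'⌋₊ < ⌊r⌋₊ → 0 ≤ s' → s' ≤ r' →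
      ∃ C, 0 < C ∧ Good r' s' C := by
    intro r' s' hlt hs' hsr'
    rw [hn] at hlt
    exact IH _ hlt r' s' rfl hs' hsr'
  rcases eq_or_lt_of_le hsr with heq | hlt
  · -- s = r
    subst heq
    refine ⟨1, one_pos, fun ε hε f hf hp => ?_⟩
    rw [sub_self, Real.rpow_zero, one_mul, one_mul]
    have h2 : 0 ≤ ε ^ (-s) * supN f :=
      mul_nonneg (Real.rpow_nonneg hε.le _) (supN_nonneg f)
    linarith
  rcases eq_or_lt_of_le hs with hs0 | hs0
  · -- s = 0
    subst hs0
    refine ⟨1, one_pos, fun ε hε f hf hp => ?_⟩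
    rw [hSemi_zero, neg_zero, Real.rpow_zero, one_mul, one_mul, sub_zero]
    have h2 : 0 ≤ ε ^ r * hSemi f r :=
      mul_nonneg (Real.rpow_nonneg hε.le _) (hSemi_nonneg f r)
    linarith
  by_cases hr1 : r < 1
  · -- 0 < s < r < 1
    refine ⟨2, two_pos, fun ε hε f hf hp => ?_⟩
    have hSs : hSemi f s = Hq f 0 s := hSemi_small hs0 (lt_trans hlt hr1)
    have hSr : hSemi f r = Hq f 0 r := hSemi_small (lt_trans hs0 hlt) hr1
    rw [hSs, hSr]
    set A := ε ^ (r - s) * Hq f 0 r with hA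
    set B := ε ^ (-s) * supN f with hB
    have hAnn : 0 ≤ A := mul_nonneg (Real.rpow_nonneg hε.le _) (Hq_nonneg f 0 r)
    have hBnn : 0 ≤ B := mul_nonneg (Real.rpow_nonneg hε.le _) (supN_nonneg f)
    refine Hq_le fun β x y => ?_
    rcases eq_or_ne x y with rfl | hxy
    · simp [qq]
      linarith
    · have ht : 0 < ‖x - y‖ := by rw [norm_pos_iff, sub_ne_zero]; exact hxy
      have hts : 0 < ‖x - y‖ ^ s := Real.rpow_pos_of_pos ht s
      have hqq : qq f 0 s β x y = |f x - f y| / ‖x - y‖ ^ s := by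
        unfold qq; rw [pd_zero, pd_zero]
      rcases le_or_gt ε ‖x - y‖ with hle | hltε
      · have hnum : |f x - f y| ≤ 2 * supN f := by
          have h1 := le_supN hf hp x; have h2 := le_supN hf hp y
          have := norm_sub_le (f x) (f y)
          simp only [Real.norm_eq_abs] at this
          linarith
        have hεs : 0 < ε ^ s := Real.rpow_pos_of_pos hε s
        have hmono : ε ^ s ≤ ‖x - y‖ ^ s := Real.rpow_le_rpow hε.le hle hs
        have hq2 : qq f 0 s β x y ≤ 2 * supN f / ε ^ s := by
          rw [hqq]
          calc |f x - f y| / ‖x - y‖ ^ s ≤ 2 * supN f / ‖x - y‖ ^ s := by gcongr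
            _ ≤ 2 * supN f / ε ^ s := by
                apply div_le_div_of_nonneg_left (by linarith [supN_nonneg f]) hεs hmono
        have hBeq : 2 * supN f / ε ^ s = 2 * B := by
          rw [hB, Real.rpow_neg hε.le, div_eq_mul_inv]; ring
        rw [hBeq] at hq2
        linarith
      · have hosc : |f x - f y| ≤ Hq f 0 r * ‖x - y‖ ^ r := by
          have := pd_osc_holder hf hp 0 (lt_trans hs0 hlt) hr1.le β x y
          rw [pd_zero, pd_zero] at this
          exact this
        have hHr := Hq_nonneg f 0 r
        have hq2 : qq f 0 s β x y ≤ Hq f 0 r * ‖x - y‖ ^ r / ‖x - y‖ ^ s := by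
          rw [hqq]; gcongr
        have hq3 : Hq f 0 r * ‖x - y‖ ^ r / ‖x - y‖ ^ s
            = Hq f 0 r * ‖x - y‖ ^ (r - s) := by
          rw [Real.rpow_sub ht]; ring
        have hq4 : ‖x - y‖ ^ (r - s) ≤ ε ^ (r - s) :=
          Real.rpow_le_rpow ht.le hltε.le (by linarith)
        have : qq f 0 s β x y ≤ A := by
          rw [hA]
          rw [hq3] at hq2
          nlinarith
        linarith
  push_neg at hr1
  obtain ⟨C₀, hC₀pos, hC₀⟩ := grad_interp hr1 IH'
  by_cases hs1 : s < 1
  · -- 0 < s < 1 ≤ r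
    refine ⟨3 * C₀ + 2, by linarith, fun ε hε f hf hp => ?_⟩
    have hSs : hSemi f s = Hq f 0 s := hSemi_small hs0 hs1
    rw [hSs]
    set H := hSemi f r with hH
    set A := ε ^ (r - s) * H with hA
    set B := ε ^ (-s) * supN f with hB
    have hHnn : 0 ≤ H := hSemi_nonneg f r
    have hAnn : 0 ≤ A := mul_nonneg (Real.rpow_nonneg hε.le _) hHnn
    have hBnn : 0 ≤ B := mul_nonneg (Real.rpow_nonneg hε.le _) (supN_nonneg f)
    have hgrad := hC₀ ε hε f hf hp
    have hM1nn : 0 ≤ Mn f 1 := Mn_nonneg f 1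
    refine Hq_le fun β x y => ?_
    rcases eq_or_ne x y with rfl | hxy
    · simp [qq]
      nlinarith
    · have ht : 0 < ‖x - y‖ := by rw [norm_pos_iff, sub_ne_zero]; exact hxy
      have hts : 0 < ‖x - y‖ ^ s := Real.rpow_pos_of_pos ht s
      have hqq : qq f 0 s β x y = |f x - f y| / ‖x - y‖ ^ s := by
        unfold qq; rw [pd_zero, pd_zero]
      rcases le_or_gt ε ‖x - y‖ with hle | hltε
      · have hnum : |f x - f y| ≤ 2 * supN f := by
          have h1 := le_supN hf hp x; have h2 := le_supN hf hp y
          have := norm_sub_le (f x) (f y)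
          simp only [Real.norm_eq_abs] at this
          linarith
        have hεs : 0 < ε ^ s := Real.rpow_pos_of_pos hε s
        have hmono : ε ^ s ≤ ‖x - y‖ ^ s := Real.rpow_le_rpow hε.le hle hs
        have hq2 : qq f 0 s β x y ≤ 2 * supN f / ε ^ s := by
          rw [hqq]
          calc |f x - f y| / ‖x - y‖ ^ s ≤ 2 * supN f / ‖x - y‖ ^ s := by gcongr
            _ ≤ 2 * supN f / ε ^ s := by
                apply div_le_div_of_nonneg_left (by linarith [supN_nonneg f]) hεs hmono
        have hBeq : 2 * supN f / ε ^ s = 2 * B := by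
          rw [hB, Real.rpow_neg hε.le, div_eq_mul_inv]; ring
        rw [hBeq] at hq2
        nlinarith
      · have hosc : |f x - f y| ≤ 3 * Mn f 1 * ‖x - y‖ := by
          have := pd_lip hf hp 0 β x y
          rw [pd_zero, pd_zero] at this
          exact this
        have hq2 : qq f 0 s β x y ≤ 3 * Mn f 1 * ‖x - y‖ / ‖x - y‖ ^ s := by
          rw [hqq]; gcongr
        have hq3 : 3 * Mn f 1 * ‖x - y‖ / ‖x - y‖ ^ s
            = 3 * Mn f 1 * ‖x - y‖ ^ (1 - s) := by
          rw [Real.rpow_sub ht, Real.rpow_one]; ring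
        have hq4 : ‖x - y‖ ^ (1 - s) ≤ ε ^ (1 - s) :=
          Real.rpow_le_rpow ht.le hltε.le (by linarith)
        have hq5 : qq f 0 s β x y ≤ 3 * Mn f 1 * ε ^ (1 - s) := by
          rw [hq3] at hq2
          nlinarith
        have hp1 : ε ^ (1-s) * ε ^ (r-1) = ε ^ (r-s) := by
          rw [← Real.rpow_add hε]; congr 1; ring
        have hp2 : ε ^ (1-s) * ε ^ (-1:ℝ) = ε ^ (-s) := by
          rw [← Real.rpow_add hε]; congr 1; ring
        have hq6 : ε ^ (1-s) * Mn f 1 ≤ C₀ * (A + B) := by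
          have hmul := mul_le_mul_of_nonneg_left hgrad
            (Real.rpow_nonneg hε.le (1-s))
          calc ε ^ (1-s) * Mn f 1
              ≤ ε ^ (1-s) * (C₀ * (ε ^ (r-1) * H + ε ^ (-1:ℝ) * supN f)) := hmul
            _ = C₀ * ((ε ^ (1-s) * ε ^ (r-1)) * H + (ε ^ (1-s) * ε ^ (-1:ℝ)) * supN f) := by
                ring
            _ = C₀ * (A + B) := by rw [hp1, hp2, hA, hB]
        have he1s : 0 ≤ ε ^ (1-s) := Real.rpow_nonneg hε.le _
        nlinarith
  push_neg at hs1
  rcases eq_or_lt_of_le hs1 with hseq | hsgt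
  · -- s = 1
    refine ⟨C₀, hC₀pos, fun ε hε f hf hp => ?_⟩
    rw [← hseq, hSemi_one]
    have := hC₀ ε hε f hf hp
    rw [show (-1:ℝ) = -(1:ℝ) by norm_num] at this
    exact this
  · -- 1 < s < r
    have hfl1 : 1 ≤ ⌊r⌋₊ := Nat.le_floor (by exact_mod_cast hr1)
    have hfl' : ⌊r - 1⌋₊ = ⌊r⌋₊ - 1 := Nat.floor_sub_one r
    have hltfl : ⌊r - 1⌋₊ < ⌊r⌋₊ := by omega
    obtain ⟨C₂, hC₂pos, hC₂⟩ := IH' (r-1) (s-1) hltfl (by linarith) (by linarith)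
    refine ⟨C₂ * (1 + C₀), by positivity, fun ε hε f hf hp => ?_⟩
    set H := hSemi f r with hH
    set A := ε ^ (r - s) * H with hA
    set B := ε ^ (-s) * supN f with hB
    have hHnn : 0 ≤ H := hSemi_nonneg f r
    have hAnn : 0 ≤ A := mul_nonneg (Real.rpow_nonneg hε.le _) hHnn
    have hBnn : 0 ≤ B := mul_nonneg (Real.rpow_nonneg hε.le _) (supN_nonneg f)
    have hM1nn : 0 ≤ Mn f 1 := Mn_nonneg f 1
    have key : hSemi f s ≤ C₂ * (ε ^ (r-s) * H + ε ^ (1-s) * Mn f 1) := by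
      refine hSemi_peel_ge hf hp hs1 fun i => ?_
      have happ := hC₂ ε hε (gg f i) (gg_contDiff hf i) (gg_per hf hp i)
      have hexp1 : (r-1) - (s-1) = r - s := by ring
      have hexp2 : -(s-1) = 1 - s := by ring
      rw [hexp1, hexp2] at happ
      refine happ.trans ?_
      have hpe1 : hSemi (gg f i) (r-1) ≤ H := hSemi_peel_le hf hp hr1 i
      have hpe2 : supN (gg f i) ≤ Mn f 1 := by
        rw [supN_eq_Mn0]; exact Mn_peel_le hf hp i 0
      gcongr <;> first
        | exact hpe1
        | exact hpe2
        | linarith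
        | positivity
    have hgrad := hC₀ ε hε f hf hp
    have hp1 : ε ^ (1-s) * ε ^ (r-1) = ε ^ (r-s) := by
      rw [← Real.rpow_add hε]; congr 1; ring
    have hp2 : ε ^ (1-s) * ε ^ (-1:ℝ) = ε ^ (-s) := by
      rw [← Real.rpow_add hε]; congr 1; ring
    have hq6 : ε ^ (1-s) * Mn f 1 ≤ C₀ * (A + B) := by
      have hmul := mul_le_mul_of_nonneg_left hgrad (Real.rpow_nonneg hε.le (1-s))
      calc ε ^ (1-s) * Mn f 1
          ≤ ε ^ (1-s) * (C₀ * (ε ^ (r-1) * H + ε ^ (-1:ℝ) * supN f)) := hmul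
        _ = C₀ * ((ε ^ (1-s) * ε ^ (r-1)) * H + (ε ^ (1-s) * ε ^ (-1:ℝ)) * supN f) := by
            ring
        _ = C₀ * (A + B) := by rw [hp1, hp2, hA, hB]
    have final : hSemi f s ≤ C₂ * A + C₂ * (C₀ * (A + B)) := by
      have h1 : C₂ * (ε ^ (r-s) * H + ε ^ (1-s) * Mn f 1)
          = C₂ * A + C₂ * (ε ^ (1-s) * Mn f 1) := by rw [hA]; ring
      rw [h1] at key
      nlinarith
    nlinarith [mul_nonneg hC₂pos.le hAnn, mul_nonneg hC₂pos.le hBnn,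
      mul_nonneg (mul_nonneg hC₂pos.le hC₀pos.le) hAnn,
      mul_nonneg (mul_nonneg hC₂pos.le hC₀pos.le) hBnn]

end HolderInterp

/-- for `0 ≤ s ≤ r` there is `C = C(r,s)` such that for every `ε > 0` and every
smooth function `f` on the 3-torus, `[f]_s ≤ C (ε^(r-s) [f]_r + ε^(-s) ‖f‖₀)`. -/
theorem holder_interpolation_eps (r s : ℝ) (hs : 0 ≤ s) (hsr : s ≤ r) :
    ∃ C : ℝ, 0 < C ∧ ∀ ε : ℝ, 0 < ε → ∀ f : E3 → ℝ, ContDiff ℝ (⊤ : ℕ∞) f → Per3 f →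
      hSemi f s ≤ C * (ε ^ (r - s) * hSemi f r + ε ^ (-s) * supN f) := by
  obtain ⟨C, hC, hGood⟩ := HolderInterp.main_ind ⌊r⌋₊ r s rfl hs hsr
  exact ⟨C, hC, hGood⟩
end
end

section
/- For real numbers 0 ≤ s ≤ r there is a constant C depending only on r and s such that [f]_s ≤ C ‖f‖_0^{1 − s/r} [f]_r^{s/r} for all smooth functions f on the 3-torus (interpolation inequality for Hölder seminorms). -/
open scoped BigOperators

noncomputable section

-- lattice vector
def lat (k : Fin 3 → ℤ) : E3 := ∑ i, (2 * Real.pi * (k i : ℝ)) • EuclideanSpace.single i (1:ℝ)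

lemma per3_def {f : E3 → ℝ} (hf : Per3 f) (x : E3) (k : Fin 3 → ℤ) : f (x + lat k) = f x := hf x k

lemma lat_apply (k : Fin 3 → ℤ) (j : Fin 3) : lat k j = 2 * Real.pi * (k j : ℝ) := by
  unfold lat
  have : (∑ i, (2 * Real.pi * (k i : ℝ)) • EuclideanSpace.single i (1:ℝ)) j
      = ∑ i, ((2 * Real.pi * (k i : ℝ)) • EuclideanSpace.single i (1:ℝ)) j := by
    simp only [WithLp.ofLp_sum, Finset.sum_apply]
  rw [this]
  simp [EuclideanSpace.single_apply]

lemma bounded_of_per {g : E3 → ℝ} (hc : Continuous g) (hp : Per3 g) :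
    ∃ B, 0 ≤ B ∧ ∀ x, |g x| ≤ B := by
  obtain ⟨C, hC⟩ := (isCompact_closedBall (0:E3) 13).exists_bound_of_continuousOn hc.continuousOn
  refine ⟨max C 0, le_max_right _ _, fun x => ?_⟩
  set k : Fin 3 → ℤ := fun i => -⌊x i / (2*Real.pi)⌋ with hk
  have hx : g (x + lat k) = g x := hp x k
  have hcoord : ∀ j, (x + lat k) j = 2*Real.pi * Int.fract (x j / (2*Real.pi)) := by
    intro j
    have h2π : (2*Real.pi) ≠ 0 := by positivity
    have : (x + lat k) j = x j + lat k j := rfl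
    rw [this, lat_apply, hk]
    simp only [Int.cast_neg]
    rw [Int.fract]
    field_simp
    ring
  have hcb : ∀ j, |(x + lat k) j| ≤ 7 := by
    intro j
    rw [hcoord j]
    have h1 : 0 ≤ Int.fract (x j / (2*Real.pi)) := Int.fract_nonneg _
    have h2 : Int.fract (x j / (2*Real.pi)) < 1 := Int.fract_lt_one _
    have hπ : Real.pi ≤ 3.15 := by
      have := Real.pi_lt_d2; linarith
    rw [abs_of_nonneg (by positivity)]
    nlinarith [Real.pi_pos]
  have hnorm : ‖x + lat k‖ ≤ 13 := by
    have h1 : ‖x + lat k‖ = Real.sqrt (∑ j, ‖(x + lat k) j‖ ^ 2) := EuclideanSpace.norm_eq _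
    rw [h1]
    have h2 : (∑ j, ‖(x + lat k) j‖ ^ 2) ≤ 169 := by
      have : ∀ j : Fin 3, ‖(x + lat k) j‖ ^ 2 ≤ 49 := by
        intro j
        have := hcb j
        rw [Real.norm_eq_abs]
        nlinarith [abs_nonneg ((x + lat k) j)]
      calc (∑ j, ‖(x + lat k) j‖ ^ 2) ≤ ∑ _j : Fin 3, (49:ℝ) :=
            Finset.sum_le_sum (fun j _ => this j)
        _ = 147 := by simp; norm_num
        _ ≤ 169 := by norm_num
    calc Real.sqrt (∑ j, ‖(x + lat k) j‖ ^ 2) ≤ Real.sqrt 169 := Real.sqrt_le_sqrt h2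
      _ = 13 := by
          rw [show (169:ℝ) = 13^2 by norm_num, Real.sqrt_sq (by norm_num)]
  calc |g x| = |g (x + lat k)| := by rw [hx]
    _ = ‖g (x + lat k)‖ := rfl
    _ ≤ C := hC _ (by simpa [Metric.mem_closedBall] using hnorm)
    _ ≤ max C 0 := le_max_left _ _

abbrev e3 (i : Fin 3) : E3 := EuclideanSpace.single i (1:ℝ)

-- smoothness of iterated derivative
lemma contDiff_it {f : E3 → ℝ} (hf : ContDiff ℝ (⊤ : ℕ∞) f) (m : ℕ) :
    ContDiff ℝ (⊤ : ℕ∞) (iteratedFDeriv ℝ m f) :=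
  hf.iteratedFDeriv_right (by exact_mod_cast le_top)

def pdV (m : ℕ) (β : Fin m → Fin 3) : Fin m → E3 := fun j => e3 (β j)

def applyV (m : ℕ) (β : Fin m → Fin 3) :
    ContinuousMultilinearMap ℝ (fun _ : Fin m => E3) ℝ →L[ℝ] ℝ :=
  ContinuousMultilinearMap.apply ℝ (fun _ : Fin m => E3) ℝ (pdV m β)

lemma contDiff_pd {f : E3 → ℝ} (hf : ContDiff ℝ (⊤ : ℕ∞) f) (m : ℕ) (β : Fin m → Fin 3) :
    ContDiff ℝ (⊤ : ℕ∞) (pd m f β) :=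
  (applyV m β).contDiff.comp (contDiff_it hf m)

lemma pd_hasFDerivAt {f : E3 → ℝ} (hf : ContDiff ℝ (⊤ : ℕ∞) f) (m : ℕ) (β : Fin m → Fin 3) (x : E3) :
    HasFDerivAt (pd m f β)
      ((applyV m β).comp (fderiv ℝ (iteratedFDeriv ℝ m f) x)) x := by
  have h2 : DifferentiableAt ℝ (iteratedFDeriv ℝ m f) x :=
    ((contDiff_it hf m).differentiable (by simp)).differentiableAt
  exact ((applyV m β).hasFDerivAt).comp x h2.hasFDerivAt

lemma pd_clm_apply {f : E3 → ℝ} (m : ℕ) (β : Fin m → Fin 3) (i : Fin 3) (x : E3) :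
    ((applyV m β).comp (fderiv ℝ (iteratedFDeriv ℝ m f) x)) (e3 i)
      = pd (m+1) f (Fin.cons i β) x := by
  have h := iteratedFDeriv_succ_apply_left
    (𝕜 := ℝ) (f := f) (x := x) (n := m)
    (fun j => EuclideanSpace.single ((Fin.cons i β : Fin (m+1) → Fin 3) j) (1:ℝ))
  rw [pd, h]
  simp only [ContinuousLinearMap.coe_comp', Function.comp_apply, applyV,
    ContinuousMultilinearMap.apply_apply]
  rfl

lemma pd_fderiv_dir {f : E3 → ℝ} (hf : ContDiff ℝ (⊤ : ℕ∞) f) (m : ℕ) (β : Fin m → Fin 3)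
    (i : Fin 3) (x : E3) :
    fderiv ℝ (pd m f β) x (e3 i) = pd (m+1) f (Fin.cons i β) x := by
  rw [(pd_hasFDerivAt hf m β x).fderiv]
  exact pd_clm_apply m β i x

lemma pd_line_hasDerivAt {f : E3 → ℝ} (hf : ContDiff ℝ (⊤ : ℕ∞) f) (m : ℕ) (β : Fin m → Fin 3)
    (i : Fin 3) (x : E3) (t : ℝ) :
    HasDerivAt (fun t : ℝ => pd m f β (x + t • e3 i))
      (pd (m+1) f (Fin.cons i β) (x + t • e3 i)) t := by
  have hline : HasDerivAt (fun t : ℝ => x + t • e3 i) (e3 i) t := by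
    simpa using ((hasDerivAt_id t).smul_const (e3 i)).const_add x
  have h := (pd_hasFDerivAt hf m β (x + t • e3 i)).comp_hasDerivAt t hline
  rw [pd_clm_apply] at h
  exact h

-- general: fderiv of a function invariant under translation by c
lemma fderiv_translation_eq {g : E3 → ℝ} (hg : Differentiable ℝ g) (c : E3)
    (hper : ∀ y, g (y + c) = g y) (x : E3) :
    fderiv ℝ g (x + c) = fderiv ℝ g x := by
  have hT : HasFDerivAt (fun y : E3 => y + c) (ContinuousLinearMap.id ℝ E3) x := by
    simpa using (hasFDerivAt_id x).add_const c
  have h1 : HasFDerivAt (g ∘ fun y : E3 => y + c) ((fderiv ℝ g (x + c)).comp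
      (ContinuousLinearMap.id ℝ E3)) x :=
    (hg (x + c)).hasFDerivAt.comp x hT
  have h2 : (g ∘ fun y : E3 => y + c) = g := funext fun y => hper y
  rw [h2, ContinuousLinearMap.comp_id] at h1
  exact h1.unique (hg x).hasFDerivAt

lemma per3_pd {f : E3 → ℝ} (hf : ContDiff ℝ (⊤ : ℕ∞) f) (hp : Per3 f) (m : ℕ)
    (β : Fin m → Fin 3) : Per3 (pd m f β) := by
  induction m with
  | zero =>
    intro x k
    show pd 0 f β _ = pd 0 f β x
    simp only [pd, iteratedFDeriv_zero_apply]
    exact hp x k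
  | succ m ih =>
    intro x k
    have hβ : β = Fin.cons (β 0) (Fin.tail β) := (Fin.cons_self_tail β).symm
    have hg : ContDiff ℝ (⊤ : ℕ∞) (pd m f (Fin.tail β)) := contDiff_pd hf m (Fin.tail β)
    have hper : ∀ y, pd m f (Fin.tail β) (y + lat k) = pd m f (Fin.tail β) y :=
      fun y => ih (Fin.tail β) y k
    have hdg : Differentiable ℝ (pd m f (Fin.tail β)) := hg.differentiable (by simp)
    have key := fderiv_translation_eq hdg (lat k) hper x
    have h1 : pd (m+1) f β (x + lat k)
        = fderiv ℝ (pd m f (Fin.tail β)) (x + lat k) (e3 (β 0)) := by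
      conv_lhs => rw [hβ]
      rw [pd_fderiv_dir hf m (Fin.tail β) (β 0) (x + lat k)]
    have h2 : pd (m+1) f β x
        = fderiv ℝ (pd m f (Fin.tail β)) x (e3 (β 0)) := by
      conv_lhs => rw [hβ]
      rw [pd_fderiv_dir hf m (Fin.tail β) (β 0) x]
    show pd (m+1) f β (x + lat k) = pd (m+1) f β x
    rw [h1, h2, key]

lemma line_hasDerivAt {g : E3 → ℝ} (hg : Differentiable ℝ g) (x v : E3) (t : ℝ) :
    HasDerivAt (fun t : ℝ => g (x + t • v)) (fderiv ℝ g (x + t • v) v) t := by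
  have hline : HasDerivAt (fun t : ℝ => x + t • v) v t := by
    simpa using ((hasDerivAt_id t).smul_const v).const_add x
  exact (hg _).hasFDerivAt.comp_hasDerivAt t hline

/-- optimization in h of `2B/h + H h^α`. -/
lemma opt_bound {X B H α : ℝ} (hB : 0 ≤ B) (hH : 0 ≤ H) (hα : 0 < α)
    (h : ∀ h : ℝ, 0 < h → X ≤ 2*B/h + H*h^α) :
    X ≤ 3 * B ^ (α/(1+α)) * H ^ (1/(1+α)) := by
  have hα1 : (0:ℝ) < 1 + α := by linarith
  rcases eq_or_lt_of_le hH with hH0 | hHpos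
  · -- H = 0 : X ≤ 0
    have hX0 : X ≤ 0 := by
      by_contra hc
      push_neg at hc
      have h1 := h ((4*B+1)/X) (by positivity)
      rw [← hH0, zero_mul, add_zero, div_div_eq_mul_div] at h1
      rw [le_div_iff₀ (by positivity)] at h1
      nlinarith [mul_nonneg hB hc.le]
    have : (0:ℝ) ≤ 3 * B ^ (α/(1+α)) * H ^ (1/(1+α)) := by positivity
    linarith
  · rcases eq_or_lt_of_le hB with hB0 | hBpos
    · -- B = 0
      have hX0 : X ≤ 0 := by
        by_contra hc
        push_neg at hc
        set ε := X/2 with hε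
        have hεpos : 0 < ε := by positivity
        have hh : (0:ℝ) < (ε/H)^(1/α) := by positivity
        have h1 := h _ hh
        rw [← hB0] at h1
        have h2 : ((ε/H)^(1/α))^α = ε/H := by
          rw [← Real.rpow_mul (by positivity), one_div,
            inv_mul_cancel₀ (ne_of_gt hα), Real.rpow_one]
        rw [h2] at h1
        have h3 : H * (ε/H) = ε := by field_simp
        rw [mul_zero, zero_div, zero_add, h3] at h1
        rw [hε] at h1
        linarith
      have hR : 3 * B ^ (α/(1+α)) * H ^ (1/(1+α)) = 0 := by
        rw [← hB0, Real.zero_rpow (by positivity)]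
        ring
      linarith
    · -- B, H > 0
      set c : ℝ := 1/(1+α) with hc
      have hcpos : 0 < c := by positivity
      set h₀ : ℝ := B^c / H^c with hh₀
      have hBc : (0:ℝ) < B^c := Real.rpow_pos_of_pos hBpos c
      have hHc : (0:ℝ) < H^c := Real.rpow_pos_of_pos hHpos c
      have hh₀pos : 0 < h₀ := by positivity
      have key := h h₀ hh₀pos
      have eB : 2*B/h₀ = 2 * (B^(1-c) * H^c) := by
        rw [hh₀, Real.rpow_sub hBpos, Real.rpow_one]
        field_simp
      have eH : H * h₀^α = B^(c*α) * H^(1-c*α) := by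
        rw [hh₀, Real.div_rpow hBc.le hHc.le,
          ← Real.rpow_mul hB, ← Real.rpow_mul hH,
          Real.rpow_sub hHpos, Real.rpow_one]
        field_simp
      have ec1 : 1 - c = α/(1+α) := by
        rw [hc]; field_simp; ring
      have ec2 : c*α = α/(1+α) := by
        rw [hc]; field_simp
      have ec3 : 1 - c*α = 1/(1+α) := by
        rw [ec2]; field_simp; ring
      calc X ≤ 2*B/h₀ + H*h₀^α := key
        _ = 2 * (B^(α/(1+α)) * H^(1/(1+α))) + B^(α/(1+α)) * H^(1/(1+α)) := by
            rw [eB, eH, ec3, ec2, ec1, hc]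
        _ = 3 * B ^ (α/(1+α)) * H ^ (1/(1+α)) := by ring

/-- interpolation of a value below two bounds. -/
lemma interp_min {X A E lam : ℝ} (hX : 0 ≤ X) (hA : 0 ≤ A) (hE : 0 ≤ E)
    (h0 : 0 ≤ lam) (h1 : lam ≤ 1) (hXA : X ≤ A) (hXE : X ≤ E) :
    X ≤ A^(1-lam) * E^lam := by
  rcases eq_or_lt_of_le hX with h|h
  · have : (0:ℝ) ≤ A^(1-lam) * E^lam := by positivity
    linarith
  · have hXX : X^(1-lam) * X^lam = X := by
      rw [← Real.rpow_add h]
      norm_num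
    refine le_trans (le_of_eq hXX.symm) ?_
    apply mul_le_mul
    · exact Real.rpow_le_rpow hX hXA (by linarith)
    · exact Real.rpow_le_rpow hX hXE h0
    · positivity
    · positivity

/-- Hölder quotient interpolation: if `|Δ| ≤ A` and `|Δ| ≤ D d^α'` then
`|Δ|/d^α ≤ A^(1-α/α') D^(α/α')`. -/
lemma holder_step {Δ A D d α α' : ℝ} (hA : 0 ≤ A) (hD : 0 ≤ D) (hd : 0 ≤ d)
    (hα : 0 < α) (hαα' : α ≤ α') (hα'1 : α' ≤ 1)
    (h1 : |Δ| ≤ A) (h2 : |Δ| ≤ D * d^α') :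
    |Δ|/d^α ≤ A^(1-α/α') * D^(α/α') := by
  have hα'pos : 0 < α' := lt_of_lt_of_le hα hαα'
  have hlam0 : 0 < α/α' := by positivity
  have hlam1 : α/α' ≤ 1 := by
    rw [div_le_one hα'pos]; exact hαα'
  rcases eq_or_lt_of_le hd with hd0 | hdpos
  · rw [← hd0, Real.zero_rpow (ne_of_gt hα), div_zero]
    positivity
  · rw [div_le_iff₀ (Real.rpow_pos_of_pos hdpos α)]
    have key : |Δ| ≤ A^(1-α/α') * (D * d^α')^(α/α') :=
      interp_min (abs_nonneg _) hA (by positivity) hlam0.le hlam1 h1 h2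
    have e1 : (D * d^α')^(α/α') = D^(α/α') * d^α := by
      rw [Real.mul_rpow hD (by positivity), ← Real.rpow_mul hdpos.le]
      congr 1
      field_simp
    calc |Δ| ≤ A^(1-α/α') * (D * d^α')^(α/α') := key
      _ = A^(1-α/α') * D^(α/α') * d^α := by rw [e1]; ring


lemma coord_le_norm (v : E3) (i : Fin 3) : |v i| ≤ ‖v‖ := by
  rw [EuclideanSpace.norm_eq]
  have h1 : |v i| = Real.sqrt (‖v i‖^2) := by
    rw [Real.sqrt_sq_eq_abs, Real.norm_eq_abs, abs_abs]
  rw [h1]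
  apply Real.sqrt_le_sqrt
  exact Finset.single_le_sum (f := fun j => ‖v j‖^2) (fun j _ => by positivity)
    (Finset.mem_univ i)

lemma line_hasDerivAt' {g : E3 → ℝ} (hg : Differentiable ℝ g) (x v : E3) (t : ℝ) :
    HasDerivAt (fun t : ℝ => g (x + t • v)) (fderiv ℝ g (x + t • v) v) t := by
  have hline : HasDerivAt (fun t : ℝ => x + t • v) v t := by
    simpa using ((hasDerivAt_id t).smul_const v).const_add x
  exact (hg _).hasFDerivAt.comp_hasDerivAt t hline

/-- op-norm bound from directional derivative bounds. -/
lemma fderiv_norm_le3 {g : E3 → ℝ} {M : ℝ} (hM : 0 ≤ M)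
    (h : ∀ i : Fin 3, ∀ x, |fderiv ℝ g x (e3 i)| ≤ M) (x : E3) :
    ‖fderiv ℝ g x‖ ≤ 3*M := by
  apply ContinuousLinearMap.opNorm_le_bound _ (by positivity)
  intro v
  have hv : ∑ i, v i • e3 i = v := by
    have h1 := (EuclideanSpace.basisFun (Fin 3) ℝ).sum_repr v
    simpa [EuclideanSpace.basisFun_repr, EuclideanSpace.basisFun_apply] using h1
  have h2 : fderiv ℝ g x v = ∑ i, v i * fderiv ℝ g x (e3 i) := by
    conv_lhs => rw [← hv]
    rw [map_sum]
    congr 1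
    funext i
    rw [map_smul]
    rfl
  rw [Real.norm_eq_abs, h2]
  calc |∑ i, v i * fderiv ℝ g x (e3 i)| ≤ ∑ i, |v i * fderiv ℝ g x (e3 i)| :=
        Finset.abs_sum_le_sum_abs _ _
    _ ≤ ∑ _i : Fin 3, ‖v‖ * M := by
        apply Finset.sum_le_sum
        intro i _
        rw [abs_mul]
        exact mul_le_mul (coord_le_norm v i) (h i x) (abs_nonneg _) (norm_nonneg _)
    _ = 3*M*‖v‖ := by simp; ring
    
/-- Lipschitz bound from derivative bounds. -/
lemma lipschitz_of_dir {g : E3 → ℝ} (hg : Differentiable ℝ g) {M : ℝ} (hM : 0 ≤ M)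
    (h : ∀ i : Fin 3, ∀ x, |fderiv ℝ g x (e3 i)| ≤ M) (x y : E3) :
    |g x - g y| ≤ 3*M*‖x - y‖ := by
  have := Convex.norm_image_sub_le_of_norm_fderiv_le (𝕜 := ℝ) (f := g) (C := 3*M)
    (s := Set.univ) (fun z _ => hg z)
    (fun z _ => fderiv_norm_le3 hM h z) convex_univ (Set.mem_univ y) (Set.mem_univ x)
  simpa [Real.norm_eq_abs] using this

/-- Landau-type bound : derivative bounded via function and Hölder constant of derivative. -/
lemma landau {g : E3 → ℝ} (hg : Differentiable ℝ g)
    {i : Fin 3} {B H α : ℝ} (hB : 0 ≤ B) (hH : 0 ≤ H) (hα0 : 0 < α) (hα1 : α ≤ 1)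
    (hgB : ∀ x, |g x| ≤ B)
    (hhol : ∀ x y, |fderiv ℝ g x (e3 i) - fderiv ℝ g y (e3 i)| ≤ H * ‖x - y‖ ^ α)
    (x : E3) :
    |fderiv ℝ g x (e3 i)| ≤ 3 * B ^ (α/(1+α)) * H ^ (1/(1+α)) := by
  apply opt_bound hB hH hα0
  intro h hh
  set φ : ℝ → ℝ := fun t => g (x + t • e3 i) with hφ
  have hd : ∀ t : ℝ, HasDerivAt φ (fderiv ℝ g (x + t • e3 i) (e3 i)) t :=
    fun t => line_hasDerivAt' hg x (e3 i) t
  obtain ⟨ξ, hξ, hslope⟩ := exists_hasDerivAt_eq_slope φ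
    (fun t => fderiv ℝ g (x + t • e3 i) (e3 i)) hh
    (fun t _ => (hd t).continuousAt.continuousWithinAt)
    (fun t _ => hd t)
  have hnorm : ‖x - (x + ξ • e3 i)‖ = ξ := by
    have : x - (x + ξ • e3 i) = -(ξ • e3 i) := by abel
    rw [this, norm_neg, norm_smul, EuclideanSpace.norm_single]
    simp [abs_of_nonneg hξ.1.le]
  have key : |fderiv ℝ g x (e3 i)| ≤
      |fderiv ℝ g x (e3 i) - fderiv ℝ g (x + ξ • e3 i) (e3 i)|
      + |fderiv ℝ g (x + ξ • e3 i) (e3 i)| := by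
    have h1 := abs_add_le (fderiv ℝ g x (e3 i) - fderiv ℝ g (x + ξ • e3 i) (e3 i))
      (fderiv ℝ g (x + ξ • e3 i) (e3 i))
    simpa using h1
  have t1 : |fderiv ℝ g x (e3 i) - fderiv ℝ g (x + ξ • e3 i) (e3 i)| ≤ H * h ^ α := by
    calc |fderiv ℝ g x (e3 i) - fderiv ℝ g (x + ξ • e3 i) (e3 i)|
        ≤ H * ‖x - (x + ξ • e3 i)‖ ^ α := hhol _ _
      _ = H * ξ ^ α := by rw [hnorm]
      _ ≤ H * h ^ α := by
          apply mul_le_mul_of_nonneg_left _ hH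
          exact Real.rpow_le_rpow hξ.1.le hξ.2.le hα0.le
  have t2 : |fderiv ℝ g (x + ξ • e3 i) (e3 i)| ≤ 2*B/h := by
    have hs : fderiv ℝ g (x + ξ • e3 i) (e3 i) = (φ h - φ 0) / (h - 0) := hslope
    rw [hs]
    rw [sub_zero, abs_div, abs_of_pos hh]
    rw [div_le_div_iff₀ hh hh]
    have : |φ h - φ 0| ≤ 2*B := by
      calc |φ h - φ 0| ≤ |φ h| + |φ 0| := abs_sub _ _
        _ ≤ B + B := add_le_add (hgB _) (hgB _)
        _ = 2*B := by ring
    nlinarith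
  linarith
-- ============ sup layer ============

def Mn (m : ℕ) (f : E3 → ℝ) : ℝ := ⨆ β : Fin m → Fin 3, ⨆ x : E3, |pd m f β x|

def Hq (m : ℕ) (α : ℝ) (f : E3 → ℝ) (β : Fin m → Fin 3) (x y : E3) : ℝ :=
  |pd m f β x - pd m f β y| / ‖x - y‖ ^ α

def Hn (m : ℕ) (α : ℝ) (f : E3 → ℝ) : ℝ :=
  ⨆ β : Fin m → Fin 3, ⨆ x : E3, ⨆ y : E3, Hq m α f β x y

instance (m : ℕ) : Nonempty (Fin m → Fin 3) := ⟨fun _ => 0⟩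

lemma Mn_nonneg (m : ℕ) (f : E3 → ℝ) : 0 ≤ Mn m f :=
  Real.iSup_nonneg fun _ => Real.iSup_nonneg fun _ => abs_nonneg _

lemma Hq_nonneg (m : ℕ) (α : ℝ) (f : E3 → ℝ) (β : Fin m → Fin 3) (x y : E3) :
    0 ≤ Hq m α f β x y :=
  div_nonneg (abs_nonneg _) (Real.rpow_nonneg (norm_nonneg _) _)

lemma Hn_nonneg (m : ℕ) (α : ℝ) (f : E3 → ℝ) : 0 ≤ Hn m α f :=
  Real.iSup_nonneg fun _ => Real.iSup_nonneg fun _ => Real.iSup_nonneg fun _ =>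
    Hq_nonneg _ _ _ _ _ _

section WithF

variable {f : E3 → ℝ} (hf : ContDiff ℝ (⊤ : ℕ∞) f) (hp : Per3 f)
include hf hp

lemma pd_bddAbove (m : ℕ) (β : Fin m → Fin 3) :
    BddAbove (Set.range fun x : E3 => |pd m f β x|) := by
  obtain ⟨B, _, hB⟩ := bounded_of_per (contDiff_pd hf m β).continuous (per3_pd hf hp m β)
  exact ⟨B, by rintro _ ⟨x, rfl⟩; exact hB x⟩

lemma le_Mn (m : ℕ) (β : Fin m → Fin 3) (x : E3) : |pd m f β x| ≤ Mn m f := by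
  have h1 : |pd m f β x| ≤ ⨆ x : E3, |pd m f β x| := le_ciSup (pd_bddAbove hf hp m β) x
  have h2 : (⨆ x : E3, |pd m f β x|) ≤ Mn m f :=
    le_ciSup (f := fun γ : Fin m → Fin 3 => ⨆ x : E3, |pd m f γ x|)
      (Set.Finite.bddAbove (Set.finite_range _)) β
  exact h1.trans h2

lemma Mn_le {m : ℕ} {c : ℝ} (hc : 0 ≤ c) (h : ∀ β x, |pd m f β x| ≤ c) : Mn m f ≤ c :=
  Real.iSup_le (fun β => Real.iSup_le (fun x => h β x) hc) hc

lemma pd_lip (m : ℕ) (β : Fin m → Fin 3) (x y : E3) :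
    |pd m f β x - pd m f β y| ≤ 3 * Mn (m+1) f * ‖x - y‖ := by
  apply lipschitz_of_dir ((contDiff_pd hf m β).differentiable (by simp)) (Mn_nonneg (m+1) f)
  intro i z
  rw [pd_fderiv_dir hf m β i z]
  exact le_Mn hf hp (m+1) (Fin.cons i β) z

lemma Hq_bound {m : ℕ} {α : ℝ} (hα : 0 < α) (hα1 : α ≤ 1) (β : Fin m → Fin 3) (x y : E3) :
    Hq m α f β x y ≤ 2 * Mn m f + 3 * Mn (m+1) f := by
  have hRHS : (0:ℝ) ≤ 2 * Mn m f + 3 * Mn (m+1) f := by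
    have := Mn_nonneg m f; have := Mn_nonneg (m+1) f; linarith
  rcases eq_or_lt_of_le (norm_nonneg (x - y)) with hd0 | hdpos
  · have hxy : x = y := sub_eq_zero.mp (norm_eq_zero.mp hd0.symm)
    subst hxy
    rw [Hq, sub_self, abs_zero, zero_div]
    exact hRHS
  · rcases le_or_gt 1 ‖x - y‖ with hge | hlt
    · -- big distance
      rw [Hq, div_le_iff₀ (Real.rpow_pos_of_pos hdpos α)]
      have h1 : |pd m f β x - pd m f β y| ≤ 2 * Mn m f := by
        calc |pd m f β x - pd m f β y| ≤ |pd m f β x| + |pd m f β y| := abs_sub _ _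
          _ ≤ Mn m f + Mn m f := add_le_add (le_Mn hf hp m β x) (le_Mn hf hp m β y)
          _ = 2 * Mn m f := by ring
      have h2 : (1:ℝ) ≤ ‖x - y‖ ^ α := by
        calc (1:ℝ) = 1 ^ α := (Real.one_rpow α).symm
          _ ≤ ‖x - y‖ ^ α := Real.rpow_le_rpow (by norm_num) hge hα.le
      calc |pd m f β x - pd m f β y| ≤ 2 * Mn m f := h1
        _ = (2 * Mn m f) * 1 := by ring
        _ ≤ (2 * Mn m f + 3 * Mn (m+1) f) * ‖x - y‖ ^ α := by
            apply mul_le_mul _ h2 (by norm_num) hRHS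
            linarith [Mn_nonneg (m+1) f]
    · -- small distance
      rw [Hq, div_le_iff₀ (Real.rpow_pos_of_pos hdpos α)]
      have h1 : |pd m f β x - pd m f β y| ≤ 3 * Mn (m+1) f * ‖x - y‖ :=
        pd_lip hf hp m β x y
      have h2 : ‖x - y‖ ≤ ‖x - y‖ ^ α := by
        calc ‖x - y‖ = ‖x - y‖ ^ (1:ℝ) := (Real.rpow_one _).symm
          _ ≤ ‖x - y‖ ^ α := Real.rpow_le_rpow_of_exponent_ge hdpos hlt.le hα1
      calc |pd m f β x - pd m f β y| ≤ 3 * Mn (m+1) f * ‖x - y‖ := h1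
        _ ≤ 3 * Mn (m+1) f * ‖x - y‖ ^ α := by
            apply mul_le_mul_of_nonneg_left h2
            linarith [Mn_nonneg (m+1) f]
        _ ≤ (2 * Mn m f + 3 * Mn (m+1) f) * ‖x - y‖ ^ α := by
            apply mul_le_mul_of_nonneg_right _ (Real.rpow_nonneg (norm_nonneg _) _)
            linarith [Mn_nonneg m f]

lemma le_Hn {m : ℕ} {α : ℝ} (hα : 0 < α) (hα1 : α ≤ 1) (β : Fin m → Fin 3) (x y : E3) :
    Hq m α f β x y ≤ Hn m α f := by
  have hQ := fun x y => Hq_bound hf hp hα hα1 β x y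
  have hQ0 : (0:ℝ) ≤ 2 * Mn m f + 3 * Mn (m+1) f := by
    have := Mn_nonneg m f; have := Mn_nonneg (m+1) f; linarith
  have b1 : ∀ x, BddAbove (Set.range fun y => Hq m α f β x y) := fun x =>
    ⟨2 * Mn m f + 3 * Mn (m+1) f, by rintro _ ⟨y, rfl⟩; exact hQ x y⟩
  have h1 : Hq m α f β x y ≤ ⨆ y, Hq m α f β x y := le_ciSup (b1 x) y
  have b2 : BddAbove (Set.range fun x => ⨆ y, Hq m α f β x y) :=
    ⟨2 * Mn m f + 3 * Mn (m+1) f, by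
      rintro _ ⟨x, rfl⟩; exact Real.iSup_le (fun y => hQ x y) hQ0⟩
  have h2 : (⨆ y, Hq m α f β x y) ≤ ⨆ x, ⨆ y, Hq m α f β x y := le_ciSup b2 x
  have h3 : (⨆ x, ⨆ y, Hq m α f β x y) ≤ Hn m α f :=
    le_ciSup (f := fun γ : Fin m → Fin 3 => ⨆ x : E3, ⨆ y : E3, Hq m α f γ x y)
      (Set.Finite.bddAbove (Set.finite_range _)) β
  exact h1.trans (h2.trans h3)

lemma Hn_le {m : ℕ} {α : ℝ} {c : ℝ} (hc : 0 ≤ c) (h : ∀ β x y, Hq m α f β x y ≤ c) :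
    Hn m α f ≤ c :=
  Real.iSup_le (fun β => Real.iSup_le (fun x => Real.iSup_le (fun y => h β x y) hc) hc) hc

lemma pd_holder {m : ℕ} {α : ℝ} (hα : 0 < α) (hα1 : α ≤ 1) (β : Fin m → Fin 3) (x y : E3) :
    |pd m f β x - pd m f β y| ≤ Hn m α f * ‖x - y‖ ^ α := by
  rcases eq_or_lt_of_le (norm_nonneg (x - y)) with hd0 | hdpos
  · have hxy : x = y := by
      have h := norm_eq_zero.mp hd0.symm
      exact sub_eq_zero.mp h
    subst hxy
    rw [sub_self, abs_zero, sub_self, norm_zero, Real.zero_rpow (ne_of_gt hα), mul_zero]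
  · have h := le_Hn hf hp hα hα1 β x y
    rw [Hq, div_le_iff₀ (Real.rpow_pos_of_pos hdpos α)] at h
    exact h

end WithF

-- ============ bricks ============

lemma Krpow_le {K a p : ℝ} (hK : 1 ≤ K) (ha : 0 ≤ a) (hp : 0 ≤ p) (hp1 : p ≤ 1) :
    (K*a)^p ≤ K * a^p := by
  rw [Real.mul_rpow (by linarith) ha]
  apply mul_le_mul_of_nonneg_right _ (Real.rpow_nonneg ha p)
  calc K^p ≤ K^(1:ℝ) := Real.rpow_le_rpow_of_exponent_le hK hp1
    _ = K := Real.rpow_one K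

section Bricks

variable {f : E3 → ℝ} (hf : ContDiff ℝ (⊤ : ℕ∞) f) (hp : Per3 f)
include hf hp

lemma brick1 (m : ℕ) {α : ℝ} (hα : 0 < α) (hα1 : α ≤ 1) :
    Mn (m+1) f ≤ 3 * (Mn m f)^(α/(1+α)) * (Hn (m+1) α f)^(1/(1+α)) := by
  have hc : (0:ℝ) ≤ 3 * (Mn m f)^(α/(1+α)) * (Hn (m+1) α f)^(1/(1+α)) :=
    mul_nonneg (mul_nonneg (by norm_num) (Real.rpow_nonneg (Mn_nonneg m f) _))
      (Real.rpow_nonneg (Hn_nonneg (m+1) α f) _)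
  apply Mn_le hf hp hc
  intro γ x
  have hγ : γ = Fin.cons (γ 0) (Fin.tail γ) := (Fin.cons_self_tail γ).symm
  conv_lhs => rw [hγ, ← pd_fderiv_dir hf m (Fin.tail γ) (γ 0) x]
  exact landau ((contDiff_pd hf m (Fin.tail γ)).differentiable (by simp))
    (Mn_nonneg m f) (Hn_nonneg (m+1) α f) hα hα1
    (le_Mn hf hp m (Fin.tail γ))
    (fun y z => by
      rw [pd_fderiv_dir hf m (Fin.tail γ) (γ 0) y, pd_fderiv_dir hf m (Fin.tail γ) (γ 0) z]
      exact pd_holder hf hp hα hα1 (Fin.cons (γ 0) (Fin.tail γ)) y z) x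

lemma brick1i (m : ℕ) :
    Mn (m+1) f ≤ 9 * (Mn m f)^((1:ℝ)/2) * (Mn (m+2) f)^((1:ℝ)/2) := by
  have hMm := Mn_nonneg m f
  have hM2 := Mn_nonneg (m+2) f
  have hc : (0:ℝ) ≤ 9 * (Mn m f)^((1:ℝ)/2) * (Mn (m+2) f)^((1:ℝ)/2) :=
    mul_nonneg (mul_nonneg (by norm_num) (Real.rpow_nonneg hMm _))
      (Real.rpow_nonneg hM2 _)
  apply Mn_le hf hp hc
  intro γ x
  have hγ : γ = Fin.cons (γ 0) (Fin.tail γ) := (Fin.cons_self_tail γ).symm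
  conv_lhs => rw [hγ, ← pd_fderiv_dir hf m (Fin.tail γ) (γ 0) x]
  have hH0 : (0:ℝ) ≤ 3 * Mn (m+2) f := by linarith
  have key := landau ((contDiff_pd hf m (Fin.tail γ)).differentiable (by simp))
    (Mn_nonneg m f) hH0 one_pos le_rfl
    (le_Mn hf hp m (Fin.tail γ))
    (fun y z => by
      rw [pd_fderiv_dir hf m (Fin.tail γ) (γ 0) y, pd_fderiv_dir hf m (Fin.tail γ) (γ 0) z,
        Real.rpow_one]
      exact pd_lip hf hp (m+1) (Fin.cons (γ 0) (Fin.tail γ)) y z) x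
  have e1 : (1:ℝ)/(1+1) = 1/2 := by norm_num
  rw [e1] at key
  calc |fderiv ℝ (pd m f (Fin.tail γ)) x (e3 (γ 0))|
      ≤ 3 * (Mn m f)^((1:ℝ)/2) * (3 * Mn (m+2) f)^((1:ℝ)/2) := key
    _ ≤ 3 * (Mn m f)^((1:ℝ)/2) * (3 * (Mn (m+2) f)^((1:ℝ)/2)) := by
        apply mul_le_mul_of_nonneg_left
          (Krpow_le (by norm_num) hM2 (by norm_num) (by norm_num))
        exact mul_nonneg (by norm_num) (Real.rpow_nonneg hMm _)
    _ = 9 * (Mn m f)^((1:ℝ)/2) * (Mn (m+2) f)^((1:ℝ)/2) := by ring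

lemma brick2 (m : ℕ) {α : ℝ} (hα : 0 < α) (hα1 : α ≤ 1) :
    Hn m α f ≤ 6 * (Mn m f)^(1-α) * (Mn (m+1) f)^α := by
  have hMm := Mn_nonneg m f
  have hM1 := Mn_nonneg (m+1) f
  have hc : (0:ℝ) ≤ 6 * (Mn m f)^(1-α) * (Mn (m+1) f)^α :=
    mul_nonneg (mul_nonneg (by norm_num) (Real.rpow_nonneg hMm _))
      (Real.rpow_nonneg hM1 _)
  apply Hn_le hf hp hc
  intro β x y
  have h1 : |pd m f β x - pd m f β y| ≤ 2 * Mn m f := by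
    calc |pd m f β x - pd m f β y| ≤ |pd m f β x| + |pd m f β y| := abs_sub _ _
      _ ≤ Mn m f + Mn m f := add_le_add (le_Mn hf hp m β x) (le_Mn hf hp m β y)
      _ = 2 * Mn m f := by ring
  have h2 : |pd m f β x - pd m f β y| ≤ (3 * Mn (m+1) f) * ‖x - y‖^(1:ℝ) := by
    rw [Real.rpow_one]
    exact pd_lip hf hp m β x y
  have key := holder_step (by linarith : (0:ℝ) ≤ 2 * Mn m f)
    (by linarith : (0:ℝ) ≤ 3 * Mn (m+1) f) (norm_nonneg (x-y)) hα hα1 le_rfl h1 h2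
  rw [div_one] at key
  calc Hq m α f β x y ≤ (2 * Mn m f)^(1-α) * (3 * Mn (m+1) f)^α := key
    _ ≤ (2 * (Mn m f)^(1-α)) * (3 * (Mn (m+1) f)^α) := by
        apply mul_le_mul (Krpow_le (by norm_num) hMm (by linarith) (by linarith))
          (Krpow_le (by norm_num) hM1 hα.le hα1)
          (Real.rpow_nonneg (by linarith) _)
          (mul_nonneg (by norm_num) (Real.rpow_nonneg hMm _))
    _ = 6 * (Mn m f)^(1-α) * (Mn (m+1) f)^α := by ring

lemma brick3 (m : ℕ) {α α' : ℝ} (hα : 0 < α) (hαα' : α ≤ α') (hα'1 : α' ≤ 1) :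
    Hn m α f ≤ 2 * (Mn m f)^(1-α/α') * (Hn m α' f)^(α/α') := by
  have hMm := Mn_nonneg m f
  have hH' := Hn_nonneg m α' f
  have hα' : 0 < α' := lt_of_lt_of_le hα hαα'
  have hc : (0:ℝ) ≤ 2 * (Mn m f)^(1-α/α') * (Hn m α' f)^(α/α') :=
    mul_nonneg (mul_nonneg (by norm_num) (Real.rpow_nonneg hMm _))
      (Real.rpow_nonneg hH' _)
  apply Hn_le hf hp hc
  intro β x y
  have h1 : |pd m f β x - pd m f β y| ≤ 2 * Mn m f := by
    calc |pd m f β x - pd m f β y| ≤ |pd m f β x| + |pd m f β y| := abs_sub _ _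
      _ ≤ Mn m f + Mn m f := add_le_add (le_Mn hf hp m β x) (le_Mn hf hp m β y)
      _ = 2 * Mn m f := by ring
  have h2 : |pd m f β x - pd m f β y| ≤ Hn m α' f * ‖x - y‖^α' :=
    pd_holder hf hp hα' hα'1 β x y
  have key := holder_step (by linarith : (0:ℝ) ≤ 2 * Mn m f) hH'
    (norm_nonneg (x-y)) hα hαα' hα'1 h1 h2
  have hlam1 : α/α' ≤ 1 := by rw [div_le_one hα']; exact hαα'
  have hlam0 : 0 ≤ α/α' := by positivity
  calc Hq m α f β x y ≤ (2 * Mn m f)^(1-α/α') * (Hn m α' f)^(α/α') := key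
    _ ≤ (2 * (Mn m f)^(1-α/α')) * (Hn m α' f)^(α/α') := by
        apply mul_le_mul_of_nonneg_right
          (Krpow_le (by norm_num) hMm (by linarith) (by linarith))
          (Real.rpow_nonneg hH' _)
    _ = 2 * (Mn m f)^(1-α/α') * (Hn m α' f)^(α/α') := by ring

end Bricks

-- ============ interpolation algebra ============

lemma interp_trans {A B Cc D C1 C2 a b c d : ℝ} (hab : a < b) (hbc : b < c) (hcd : c < d)
    (hA : 0 ≤ A) (hCc : 0 ≤ Cc) (hD : 0 ≤ D) (hC1 : 0 < C1) (hC2 : 0 < C2)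
    (h1 : B ≤ C1 * A^((c-b)/(c-a)) * Cc^((b-a)/(c-a)))
    (h2 : Cc ≤ C2 * A^((d-c)/(d-a)) * D^((c-a)/(d-a))) :
    B ≤ (C1*C2^((b-a)/(c-a))) * A^((d-b)/(d-a)) * D^((b-a)/(d-a)) := by
  have hca : (0:ℝ) < c - a := by linarith
  have hda : (0:ℝ) < d - a := by linarith
  set p1 : ℝ := (c-b)/(c-a) with hp1
  set q1 : ℝ := (b-a)/(c-a) with hq1
  set p2 : ℝ := (d-c)/(d-a) with hp2
  set q2 : ℝ := (c-a)/(d-a) with hq2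
  have hq1pos : 0 < q1 := div_pos (by linarith) hca
  have hp1pos : 0 < p1 := div_pos (by linarith) hca
  have hp2pos : 0 < p2 := div_pos (by linarith) hda
  have hq2pos : 0 < q2 := div_pos (by linarith) hda
  have k1 : Cc^q1 ≤ (C2 * A^p2 * D^q2)^q1 :=
    Real.rpow_le_rpow hCc h2 hq1pos.le
  have k2 : (C2 * A^p2 * D^q2)^q1 = C2^q1 * A^(p2*q1) * D^(q2*q1) := by
    rw [Real.mul_rpow (by positivity) (Real.rpow_nonneg hD _),
      Real.mul_rpow hC2.le (Real.rpow_nonneg hA _),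
      ← Real.rpow_mul hA, ← Real.rpow_mul hD]
  have hsum : p1 + p2*q1 ≠ 0 := by
    have : 0 < p2*q1 := mul_pos hp2pos hq1pos
    positivity
  have e1 : q2*q1 = (b-a)/(d-a) := by
    rw [hq1, hq2]; field_simp
  have e2 : p1 + p2*q1 = (d-b)/(d-a) := by
    rw [hp1, hp2, hq1]; field_simp; ring
  calc B ≤ C1 * A^p1 * Cc^q1 := h1
    _ ≤ C1 * A^p1 * (C2^q1 * A^(p2*q1) * D^(q2*q1)) := by
        apply mul_le_mul_of_nonneg_left (k1.trans_eq k2)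
        exact mul_nonneg hC1.le (Real.rpow_nonneg hA _)
    _ = (C1 * C2^q1) * (A^p1 * A^(p2*q1)) * D^(q2*q1) := by ring
    _ = (C1 * C2^q1) * A^(p1 + p2*q1) * D^(q2*q1) := by
        rw [Real.rpow_add' hA hsum]
    _ = (C1 * C2^q1) * A^((d-b)/(d-a)) * D^((b-a)/(d-a)) := by rw [e1, e2]

lemma interp_solve {A B Cc D C1 C2 a b c d : ℝ} (hab : a < b) (hbc : b < c) (hcd : c < d)
    (hA : 0 ≤ A) (hB : 0 ≤ B) (hCc : 0 ≤ Cc) (hD : 0 ≤ D) (hC1 : 0 < C1) (hC2 : 0 < C2)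
    (h1 : B ≤ C1 * A^((c-b)/(c-a)) * Cc^((b-a)/(c-a)))
    (h2 : Cc ≤ C2 * B^((d-c)/(d-b)) * D^((c-b)/(d-b))) :
    Cc ≤ (C2*C1^((d-c)/(d-b)))^(1/(1-((b-a)/(c-a))*((d-c)/(d-b))))
        * A^((d-c)/(d-a)) * D^((c-a)/(d-a)) := by
  have hca : (0:ℝ) < c - a := by linarith
  have hdb : (0:ℝ) < d - b := by linarith
  have hda : (0:ℝ) < d - a := by linarith
  have hcb : (0:ℝ) < c - b := by linarith
  have hba : (0:ℝ) < b - a := by linarith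
  have hdc : (0:ℝ) < d - c := by linarith
  set p1 : ℝ := (c-b)/(c-a) with hp1
  set q1 : ℝ := (b-a)/(c-a) with hq1
  set μ : ℝ := (d-c)/(d-b) with hμ
  set ν : ℝ := (c-b)/(d-b) with hν
  set ρ : ℝ := q1 * μ with hρ
  have hq1pos : 0 < q1 := div_pos hba hca
  have hq1lt : q1 < 1 := by
    rw [hq1, div_lt_one hca]; linarith
  have hμpos : 0 < μ := div_pos hdc hdb
  have hμlt : μ < 1 := by
    rw [hμ, div_lt_one hdb]; linarith
  have hρpos : 0 < ρ := mul_pos hq1pos hμpos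
  have hρlt : ρ < 1 := by
    calc ρ < 1 * μ := by
          rw [hρ]; exact mul_lt_mul_of_pos_right hq1lt hμpos
      _ = μ := one_mul μ
      _ < 1 := hμlt
  have h1ρ : (0:ℝ) < 1 - ρ := by linarith
  have hp1pos : 0 < p1 := div_pos hcb hca
  have hνpos : 0 < ν := div_pos hcb hdb
  set E : ℝ := (C2*C1^μ) * A^(p1*μ) * D^ν with hE
  have hEnn : 0 ≤ E := by
    apply mul_nonneg (mul_nonneg (by positivity) (Real.rpow_nonneg hA _))
      (Real.rpow_nonneg hD _)
  -- key : Cc ≤ E * Cc^ρ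
  have key : Cc ≤ E * Cc^ρ := by
    have k1 : B^μ ≤ (C1 * A^p1 * Cc^q1)^μ := Real.rpow_le_rpow hB h1 hμpos.le
    have k2 : (C1 * A^p1 * Cc^q1)^μ = C1^μ * A^(p1*μ) * Cc^ρ := by
      rw [Real.mul_rpow (by positivity) (Real.rpow_nonneg hCc _),
        Real.mul_rpow hC1.le (Real.rpow_nonneg hA _),
        ← Real.rpow_mul hA, ← Real.rpow_mul hCc, hρ]
    calc Cc ≤ C2 * B^μ * D^ν := h2
      _ ≤ C2 * (C1^μ * A^(p1*μ) * Cc^ρ) * D^ν := by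
          apply mul_le_mul_of_nonneg_right _ (Real.rpow_nonneg hD _)
          exact mul_le_mul_of_nonneg_left (k1.trans_eq k2) hC2.le
      _ = E * Cc^ρ := by rw [hE]; ring
  rcases eq_or_lt_of_le hCc with hCc0 | hCcpos
  · rw [← hCc0]
    apply mul_nonneg (mul_nonneg (Real.rpow_nonneg (by positivity) _)
      (Real.rpow_nonneg hA _)) (Real.rpow_nonneg hD _)
  · -- divide
    have hstep : Cc^(1-ρ) ≤ E := by
      rw [Real.rpow_sub hCcpos, Real.rpow_one, div_le_iff₀ (Real.rpow_pos_of_pos hCcpos ρ)]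
      exact key
    have hCc1 : Cc = (Cc^(1-ρ))^(1/(1-ρ)) := by
      rw [← Real.rpow_mul hCc, mul_one_div, div_self (ne_of_gt h1ρ), Real.rpow_one]
    have hfin : Cc ≤ E^(1/(1-ρ)) := by
      rw [hCc1]
      exact Real.rpow_le_rpow (Real.rpow_nonneg hCc _) hstep (by positivity)
    have hexpand : E^(1/(1-ρ)) = (C2*C1^μ)^(1/(1-ρ)) * A^(p1*μ*(1/(1-ρ))) * D^(ν*(1/(1-ρ))) := by
      rw [hE, Real.mul_rpow (mul_nonneg (by positivity) (Real.rpow_nonneg hA _))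
          (Real.rpow_nonneg hD _),
        Real.mul_rpow (by positivity) (Real.rpow_nonneg hA _),
        ← Real.rpow_mul hA, ← Real.rpow_mul hD]
    -- exponent identities
    have h1ρval : 1 - ρ = ((d-a)*(c-b))/((c-a)*(d-b)) := by
      rw [hρ, hq1, hμ]; field_simp; ring
    have eA : p1*μ*(1/(1-ρ)) = (d-c)/(d-a) := by
      rw [h1ρval, hp1, hμ]
      field_simp
    have eD : ν*(1/(1-ρ)) = (c-a)/(d-a) := by
      rw [h1ρval, hν]
      field_simp
    rw [hexpand, eA, eD] at hfin
    exact hfin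

-- ============ good predicate and chains ============

def good (t u v : ℝ) : Prop :=
  ∃ C : ℝ, 0 < C ∧ ∀ f : E3 → ℝ, ContDiff ℝ (⊤ : ℕ∞) f → Per3 f →
    hSemi f u ≤ C * hSemi f t ^ ((v - u)/(v - t)) * hSemi f v ^ ((u - t)/(v - t))

lemma hSemi_nonneg (f : E3 → ℝ) (r : ℝ) : 0 ≤ hSemi f r := by
  rw [hSemi]; split
  · exact Real.iSup_nonneg fun _ => Real.iSup_nonneg fun _ => abs_nonneg _
  · exact Real.iSup_nonneg fun _ => Real.iSup_nonneg fun _ => Real.iSup_nonneg fun _ =>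
      div_nonneg (abs_nonneg _) (Real.rpow_nonneg (norm_nonneg _) _)

lemma good_trans {a b c d : ℝ} (hab : a < b) (hbc : b < c) (hcd : c < d)
    (g1 : good a b c) (g2 : good a c d) : good a b d := by
  obtain ⟨C1, hC1, h1⟩ := g1
  obtain ⟨C2, hC2, h2⟩ := g2
  refine ⟨C1*C2^((b-a)/(c-a)), by positivity, fun f hf hp => ?_⟩
  exact interp_trans hab hbc hcd (hSemi_nonneg f a) (hSemi_nonneg f c) (hSemi_nonneg f d)
    hC1 hC2 (h1 f hf hp) (h2 f hf hp)

lemma good_step {a b c d : ℝ} (hab : a < b) (hbc : b < c) (hcd : c < d)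
    (g1 : good a b c) (g2 : good b c d) : good a c d := by
  obtain ⟨C1, hC1, h1⟩ := g1
  obtain ⟨C2, hC2, h2⟩ := g2
  refine ⟨(C2*C1^((d-c)/(d-b)))^(1/(1-((b-a)/(c-a))*((d-c)/(d-b)))),
    Real.rpow_pos_of_pos (by positivity) _, fun f hf hp => ?_⟩
  exact interp_solve hab hbc hcd (hSemi_nonneg f a) (hSemi_nonneg f b) (hSemi_nonneg f c)
    (hSemi_nonneg f d) hC1 hC2 (h1 f hf hp) (h2 f hf hp)

lemma t_lt_of_chain (t : ℕ → ℝ) (N : ℕ) (hmono : ∀ k, k < N → t k < t (k+1)) :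
    ∀ i j, i < j → j ≤ N → t i < t j := by
  intro i j hij hjN
  induction j with
  | zero => omega
  | succ j ih =>
    rcases Nat.lt_or_ge i j with h | h
    · exact lt_trans (ih h (by omega)) (hmono j (by omega))
    · have : i = j := by omega
      subst this
      exact hmono i (by omega)

lemma good_chain (N : ℕ) (hN : 2 ≤ N) (t : ℕ → ℝ)
    (hmono : ∀ k, k < N → t k < t (k+1))
    (hbrick : ∀ k, 0 < k → k < N → good (t (k-1)) (t k) (t (k+1))) :
    ∀ k, 0 < k → k < N → good (t 0) (t k) (t N) := by
  induction N, hN using Nat.le_induction with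
  | base =>
    intro k hk0 hk2
    have hk1 : k = 1 := by omega
    subst hk1
    exact hbrick 1 (by omega) (by omega)
  | succ N hN ih =>
    have hlt := t_lt_of_chain t (N+1) hmono
    have ihh := ih (fun k hk => hmono k (by omega)) (fun k h0 hk => hbrick k h0 (by omega))
    have gprev : good (t 0) (t (N-1)) (t N) := ihh (N-1) (by omega) (by omega)
    have hbrickN : good (t (N-1)) (t N) (t (N+1)) := by
      have := hbrick N (by omega) (by omega)
      exact this
    have gN : good (t 0) (t N) (t (N+1)) := by
      apply good_step _ _ _ gprev hbrickN
      · exact hlt 0 (N-1) (by omega) (by omega)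
      · exact hlt (N-1) N (by omega) (by omega)
      · exact hlt N (N+1) (by omega) (by omega)
    intro k hk0 hkN
    rcases Nat.lt_or_ge k N with h | h
    · exact good_trans (hlt 0 k (by omega) (by omega)) (hlt k N (by omega) (by omega))
        (hlt N (N+1) (by omega) (by omega)) (ihh k hk0 h) gN
    · have : k = N := by omega
      subst this
      exact gN

-- ============ hSemi bridges ============

lemma hSemi_eq_Mn (f : E3 → ℝ) {r : ℝ} (h : r = (⌊r⌋₊ : ℝ)) : hSemi f r = Mn ⌊r⌋₊ f := by
  rw [hSemi, if_pos h]; rfl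

lemma hSemi_eq_Hn (f : E3 → ℝ) {r : ℝ} (h : r ≠ (⌊r⌋₊ : ℝ)) :
    hSemi f r = Hn ⌊r⌋₊ (r - (⌊r⌋₊ : ℝ)) f := by
  rw [hSemi, if_neg h]; rfl

lemma hSemi_natCast (f : E3 → ℝ) (k : ℕ) : hSemi f (k:ℝ) = Mn k f := by
  have h : (k:ℝ) = (⌊(k:ℝ)⌋₊ : ℝ) := by rw [Nat.floor_natCast]
  rw [hSemi_eq_Mn f h, Nat.floor_natCast]

lemma Mn_zero (f : E3 → ℝ) : Mn 0 f = supN f := by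
  rw [Mn, supN]
  have h : ∀ β : Fin 0 → Fin 3, (⨆ x : E3, |pd 0 f β x|) = ⨆ x : E3, |f x| := by
    intro β
    simp only [pd, iteratedFDeriv_zero_apply]
  rw [show (fun β : Fin 0 → Fin 3 => ⨆ x : E3, |pd 0 f β x|)
      = fun _ : Fin 0 → Fin 3 => ⨆ x : E3, |f x| from funext h]
  exact ciSup_const

lemma hSemi_zero (f : E3 → ℝ) : hSemi f 0 = supN f := by
  have h := hSemi_natCast f 0
  simpa [Mn_zero] using h

-- ============ good bricks ============

lemma goodA (k : ℕ) (hk : 1 ≤ k) : good ((k:ℝ)-1) (k:ℝ) ((k:ℝ)+1) := by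
  obtain ⟨m, rfl⟩ : ∃ m, k = m + 1 := ⟨k-1, by omega⟩
  refine ⟨9, by norm_num, fun f hf hp => ?_⟩
  have e0 : ((m+1:ℕ):ℝ) - 1 = ((m:ℕ):ℝ) := by push_cast; ring
  have e2 : ((m+1:ℕ):ℝ) + 1 = ((m+2:ℕ):ℝ) := by push_cast; ring
  rw [e0, e2, hSemi_natCast f (m+1), hSemi_natCast f m, hSemi_natCast f (m+2)]
  have ex1 : (((m+2:ℕ):ℝ) - ((m+1:ℕ):ℝ))/(((m+2:ℕ):ℝ) - ((m:ℕ):ℝ)) = 1/2 := by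
    push_cast
    norm_num
  have ex2 : (((m+1:ℕ):ℝ) - ((m:ℕ):ℝ))/(((m+2:ℕ):ℝ) - ((m:ℕ):ℝ)) = 1/2 := by
    push_cast
    norm_num
  rw [ex1, ex2]
  exact brick1i hf hp m

lemma goodB (m : ℕ) {r : ℝ} (h1 : (m:ℝ)+1 < r) (h2 : r < (m:ℝ)+2) :
    good (m:ℝ) ((m:ℝ)+1) r := by
  have hr0 : (0:ℝ) ≤ r := by
    have hm0 : (0:ℝ) ≤ (m:ℝ) := Nat.cast_nonneg m
    linarith
  have hfloor : ⌊r⌋₊ = m+1 := by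
    rw [Nat.floor_eq_iff hr0]
    constructor
    · push_cast; linarith
    · push_cast; linarith
  set α : ℝ := r - ((m:ℝ)+1) with hα
  have hα0 : 0 < α := by rw [hα]; linarith
  have hα1 : α ≤ 1 := by rw [hα]; linarith
  refine ⟨3, by norm_num, fun f hf hp => ?_⟩
  have hne : r ≠ (⌊r⌋₊ : ℝ) := by
    rw [hfloor]; push_cast; intro hc; rw [hc] at h1; linarith
  have hhr : hSemi f r = Hn (m+1) α f := by
    rw [hSemi_eq_Hn f hne, hfloor, hα]
    congr 1
    push_cast
    ring
  have e1 : ((m:ℝ)+1) = ((m+1:ℕ):ℝ) := by push_cast; ring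
  rw [e1, hSemi_natCast f (m+1), ← e1, hSemi_natCast f m, hhr]
  have ex1 : (r - ((m:ℝ)+1))/(r - (m:ℝ)) = α/(1+α) := by
    rw [hα]
    have : r - (m:ℝ) = 1 + (r - ((m:ℝ)+1)) := by ring
    rw [this]
  have ex2 : (((m:ℝ)+1) - (m:ℝ))/(r - (m:ℝ)) = 1/(1+α) := by
    rw [hα]
    have h3 : r - (m:ℝ) = 1 + (r - ((m:ℝ)+1)) := by ring
    rw [h3]
    norm_num
  rw [ex1, ex2]
  exact brick1 hf hp m hα0 hα1

-- trivial good-style endpoint bounds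
lemma node_zero {r : ℝ} (hr : 0 < r) :
    ∀ f : E3 → ℝ, ContDiff ℝ (⊤ : ℕ∞) f → Per3 f →
      supN f ≤ 1 * supN f ^ ((r - 0)/r) * hSemi f r ^ ((0:ℝ)/r) := by
  intro f hf hp
  rw [sub_zero, div_self (ne_of_gt hr), zero_div, Real.rpow_one, Real.rpow_zero]
  simp

/-- main node bound: every integer node `j ≤ r` interpolates between `0` and `r`. -/
lemma node_bound {r : ℝ} (hr : 0 < r) (j : ℕ) (hj : (j:ℝ) ≤ r) :
    ∃ C : ℝ, 0 < C ∧ ∀ f : E3 → ℝ, ContDiff ℝ (⊤ : ℕ∞) f → Per3 f →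
      Mn j f ≤ C * supN f ^ ((r - (j:ℝ))/r) * hSemi f r ^ ((j:ℝ)/r) := by
  rcases Nat.eq_zero_or_pos j with hj0 | hjpos
  · subst hj0
    refine ⟨1, by norm_num, fun f hf hp => ?_⟩
    have h := node_zero hr f hf hp
    rw [Mn_zero]
    simpa using h
  · rcases eq_or_lt_of_le hj with hjr | hjlt
    · -- (j:ℝ) = r
      refine ⟨1, by norm_num, fun f hf hp => ?_⟩
      rw [← hjr]
      rw [sub_self, zero_div, div_self (by positivity : ((j:ℝ)) ≠ 0),
        Real.rpow_zero, Real.rpow_one, hSemi_natCast f j]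
      simp
    · -- 0 < j, j < r : chain argument
      set M := ⌊r⌋₊ with hM
      have hMr : (M:ℝ) ≤ r := Nat.floor_le hr.le
      have hrM1 : r < (M:ℝ)+1 := by
        have := Nat.lt_floor_add_one r
        push_cast at this ⊢
        linarith
      have hjM : j ≤ M := by
        have : (j:ℝ) < (M:ℝ)+1 := lt_of_lt_of_le hjlt (by linarith)
        exact_mod_cast Nat.lt_add_one_iff.mp (by exact_mod_cast this)
      by_cases hint : r = (M:ℝ)
      · -- r integer, chain t i = i, N = M
        have hjltM : j < M := by
          by_contra hc
          have : j = M := by omega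
          subst this
          rw [← hint] at hjlt
          exact lt_irrefl _ hjlt
        have hN2 : 2 ≤ M := by omega
        have hchain := good_chain M hN2 (fun i => (i:ℝ))
          (fun k _ => by push_cast; linarith)
          (fun k hk0 hkM => by
            show good ((k-1:ℕ):ℝ) ((k:ℕ):ℝ) ((k+1:ℕ):ℝ)
            have hg := goodA k (by omega)
            have e0 : ((k-1:ℕ):ℝ) = (k:ℝ)-1 := by
              have : (1:ℕ) ≤ k := by omega
              push_cast [this]
              ring
            have e1 : ((k+1:ℕ):ℝ) = (k:ℝ)+1 := by push_cast; ring
            rw [e0, e1]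
            exact hg)
        have hgood := hchain j hjpos hjltM
        obtain ⟨C, hC, h⟩ := hgood
        refine ⟨C, hC, fun f hf hp => ?_⟩
        have hh := h f hf hp
        rw [Nat.cast_zero, hSemi_zero, sub_zero, sub_zero, hSemi_natCast f j] at hh
        rw [hint]
        exact hh
      · -- r noninteger, N = M+1, t i = min i r
        have hMltr : (M:ℝ) < r := lt_of_le_of_ne hMr (fun hc => hint hc.symm)
        set t : ℕ → ℝ := fun i => min (i:ℝ) r with ht
        have htval : ∀ i, i ≤ M → t i = (i:ℝ) := by
          intro i hi
          rw [ht]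
          apply min_eq_left
          calc (i:ℝ) ≤ (M:ℝ) := by exact_mod_cast hi
            _ ≤ r := hMr
        have htop : t (M+1) = r := by
          rw [ht]
          apply min_eq_right
          push_cast
          linarith
        have hN2 : 2 ≤ M+1 := by
          have : 1 ≤ M := by omega
          omega
        have hchain := good_chain (M+1) hN2 t
          (fun k hk => by
            rcases Nat.lt_or_ge (k+1) (M+1) with h | h
            · rw [htval k (by omega), htval (k+1) (by omega)]
              push_cast; linarith
            · have hkM : k = M := by omega
              subst hkM
              rw [htval M le_rfl, htop]
              exact hMltr)
          (fun k hk0 hkM => by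
            rcases Nat.lt_or_ge (k+1) (M+1) with h | h
            · rw [htval (k-1) (by omega), htval k (by omega), htval (k+1) (by omega)]
              have hg := goodA k (by omega)
              have e0 : ((k-1:ℕ):ℝ) = (k:ℝ)-1 := by
                have : (1:ℕ) ≤ k := by omega
                push_cast [this]
                ring
              have e1 : ((k+1:ℕ):ℝ) = (k:ℝ)+1 := by push_cast; ring
              rw [e0, e1]
              exact hg
            · have hkM' : k = M := by omega
              subst hkM'
              rw [htval (M-1) (by omega), htval M le_rfl, htop]
              have hM1 : 1 ≤ M := by omega
              have e1 : ((M-1:ℕ):ℝ)+1 = (M:ℝ) := by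
                push_cast [hM1]
                ring
              rw [show ((M:ℕ):ℝ) = ((M-1:ℕ):ℝ)+1 from e1.symm]
              apply goodB (M-1)
              · rw [e1]
                exact hMltr
              · have e2 : ((M-1:ℕ):ℝ)+2 = (M:ℝ)+1 := by
                  push_cast [hM1]
                  ring
                rw [e2]
                exact hrM1)
        have hgood := hchain j hjpos (by omega)
        obtain ⟨C, hC, h⟩ := hgood
        refine ⟨C, hC, fun f hf hp => ?_⟩
        have hh := h f hf hp
        rw [htval 0 (by omega), htval j hjM, htop] at hh
        rw [Nat.cast_zero, hSemi_zero, sub_zero, sub_zero, hSemi_natCast f j] at hh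
        exact hh

-- ============ final assembly ============

lemma supN_nonneg (f : E3 → ℝ) : 0 ≤ supN f :=
  Real.iSup_nonneg fun _ => abs_nonneg _

lemma combine2 {X P Q A B K C1 C2 al pA pB qA qB : ℝ}
    (hP : 0 ≤ P) (hQ : 0 ≤ Q) (hA : 0 ≤ A) (hB : 0 ≤ B)
    (hK : 0 < K) (hC1 : 0 < C1) (hC2 : 0 < C2)
    (hal0 : 0 ≤ al) (hal1 : al ≤ 1)
    (hsA : pA*(1-al) + qA*al ≠ 0) (hsB : pB*(1-al) + qB*al ≠ 0)
    (h : X ≤ K * P^(1-al) * Q^al)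
    (h1 : P ≤ C1 * A^pA * B^pB) (h2 : Q ≤ C2 * A^qA * B^qB) :
    X ≤ (K * C1^(1-al) * C2^al) * A^(pA*(1-al) + qA*al) * B^(pB*(1-al) + qB*al) := by
  have k1 : P^(1-al) ≤ C1^(1-al) * A^(pA*(1-al)) * B^(pB*(1-al)) := by
    calc P^(1-al) ≤ (C1 * A^pA * B^pB)^(1-al) :=
          Real.rpow_le_rpow hP h1 (by linarith)
      _ = C1^(1-al) * A^(pA*(1-al)) * B^(pB*(1-al)) := by
          rw [Real.mul_rpow (mul_nonneg hC1.le (Real.rpow_nonneg hA _)) (Real.rpow_nonneg hB _),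
            Real.mul_rpow hC1.le (Real.rpow_nonneg hA _),
            ← Real.rpow_mul hA, ← Real.rpow_mul hB]
  have k2 : Q^al ≤ C2^al * A^(qA*al) * B^(qB*al) := by
    calc Q^al ≤ (C2 * A^qA * B^qB)^al :=
          Real.rpow_le_rpow hQ h2 hal0
      _ = C2^al * A^(qA*al) * B^(qB*al) := by
          rw [Real.mul_rpow (mul_nonneg hC2.le (Real.rpow_nonneg hA _)) (Real.rpow_nonneg hB _),
            Real.mul_rpow hC2.le (Real.rpow_nonneg hA _),
            ← Real.rpow_mul hA, ← Real.rpow_mul hB]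
  calc X ≤ K * P^(1-al) * Q^al := h
    _ ≤ K * (C1^(1-al) * A^(pA*(1-al)) * B^(pB*(1-al))) * (C2^al * A^(qA*al) * B^(qB*al)) := by
        apply mul_le_mul
        · exact mul_le_mul_of_nonneg_left k1 hK.le
        · exact k2
        · exact Real.rpow_nonneg hQ _
        · apply mul_nonneg hK.le
          apply mul_nonneg (mul_nonneg (Real.rpow_nonneg hC1.le _) (Real.rpow_nonneg hA _))
            (Real.rpow_nonneg hB _)
    _ = (K * C1^(1-al) * C2^al) * (A^(pA*(1-al)) * A^(qA*al)) * (B^(pB*(1-al)) * B^(qB*al)) := by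
        ring
    _ = (K * C1^(1-al) * C2^al) * A^(pA*(1-al) + qA*al) * B^(pB*(1-al) + qB*al) := by
        rw [Real.rpow_add' hA hsA, Real.rpow_add' hB hsB]

/-- interpolation inequality `[f]_s ≤ C ‖f‖₀^(1-s/r) [f]_r^(s/r)` for `0 ≤ s ≤ r`,
with `C` depending only on `r` and `s`, for all smooth functions on the 3-torus. -/
theorem holder_interpolation (r s : ℝ) (hs : 0 ≤ s) (hsr : s ≤ r) :
    ∃ C : ℝ, 0 < C ∧ ∀ f : E3 → ℝ, ContDiff ℝ (⊤ : ℕ∞) f → Per3 f →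
      hSemi f s ≤ C * supN f ^ (1 - s / r) * hSemi f r ^ (s / r) := by
  by_cases hsr_eq : s = r
  · subst hsr_eq
    refine ⟨1, one_pos, fun f hf hp => ?_⟩
    by_cases hr0 : s = 0
    · subst hr0
      rw [hSemi_zero, zero_div, sub_zero, Real.rpow_one, Real.rpow_zero]
      simp
    · rw [div_self hr0, sub_self, Real.rpow_zero, Real.rpow_one]
      simp [hSemi_nonneg]
  · have hslt : s < r := lt_of_le_of_ne hsr hsr_eq
    have hr0 : 0 < r := lt_of_le_of_lt hs hslt
    by_cases hs0 : s = 0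
    · subst hs0
      refine ⟨1, one_pos, fun f hf hp => ?_⟩
      rw [hSemi_zero, zero_div, sub_zero, Real.rpow_one, Real.rpow_zero]
      simp
    · have hspos : 0 < s := lt_of_le_of_ne hs (Ne.symm hs0)
      set m := ⌊s⌋₊ with hm
      have hms : (m:ℝ) ≤ s := Nat.floor_le hs
      have hsm1 : s < (m:ℝ)+1 := by
        have := Nat.lt_floor_add_one s
        push_cast at this ⊢
        rw [hm]
        linarith
      have hsdivr_lt : s/r < 1 := (div_lt_one hr0).mpr hslt
      have hsdivr_pos : 0 < s/r := div_pos hspos hr0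
      have esub : (r - s)/r = 1 - s/r := by
        rw [sub_div, div_self (ne_of_gt hr0)]
      by_cases hsint : s = (m:ℝ)
      · -- s is a positive integer
        obtain ⟨C, hC, h⟩ := node_bound hr0 m (by rw [← hsint]; exact hsr)
        refine ⟨C, hC, fun f hf hp => ?_⟩
        have hh := h f hf hp
        rw [← hsint, esub] at hh
        calc hSemi f s = Mn m f := by rw [hsint, hSemi_natCast f m]
          _ ≤ _ := hh
      · -- s noninteger
        have hmlt : (m:ℝ) < s := lt_of_le_of_ne hms (fun hc => hsint hc.symm)
        set α : ℝ := s - (m:ℝ) with hα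
        have hα0 : 0 < α := by rw [hα]; linarith
        have hα1 : α ≤ 1 := by rw [hα]; linarith
        have hsemi_s : ∀ f : E3 → ℝ, hSemi f s = Hn m α f := by
          intro f
          rw [hSemi_eq_Hn f (by rw [← hm]; exact hsint), ← hm, ← hα]
        by_cases hcase : (m:ℝ)+1 ≤ r
        · -- between nodes m and m+1
          obtain ⟨C1, hC1, h1⟩ := node_bound hr0 m (by linarith)
          obtain ⟨C2, hC2, h2⟩ := node_bound hr0 (m+1) (by push_cast; linarith)
          refine ⟨6 * C1^(1-α) * C2^α, by positivity, fun f hf hp => ?_⟩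
          have h1f := h1 f hf hp
          have h2f := h2 f hf hp
          have hbrick := brick2 hf hp m hα0 hα1
          have key := combine2 (Mn_nonneg m f) (Mn_nonneg (m+1) f)
            (supN_nonneg f) (hSemi_nonneg f r)
            (by norm_num : (0:ℝ) < 6) hC1 hC2 hα0.le hα1
            (pA := (r - (m:ℝ))/r) (pB := (m:ℝ)/r)
            (qA := (r - ((m+1:ℕ):ℝ))/r) (qB := ((m+1:ℕ):ℝ)/r)
            ?_ ?_ hbrick h1f h2f
          · rw [hsemi_s f]
            have eA : (r - (m:ℝ))/r*(1-α) + (r - ((m+1:ℕ):ℝ))/r*α = 1 - s/r := by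
              rw [hα]
              push_cast
              field_simp
              ring
            have eB : (m:ℝ)/r*(1-α) + ((m+1:ℕ):ℝ)/r*α = s/r := by
              rw [hα]
              push_cast
              field_simp
              ring
            rw [eA, eB] at key
            exact key
          · -- pA*(1-al)+qA*al ≠ 0
            have eA : (r - (m:ℝ))/r*(1-α) + (r - ((m+1:ℕ):ℝ))/r*α = 1 - s/r := by
              rw [hα]
              push_cast
              field_simp
              ring
            rw [eA]
            linarith
          · have eB : (m:ℝ)/r*(1-α) + ((m+1:ℕ):ℝ)/r*α = s/r := by
              rw [hα]
              push_cast
              field_simp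
              ring
            rw [eB]
            linarith
        · -- same unit interval : m ≤ s < r < m+1
          push_neg at hcase
          have hmr : (m:ℝ) < r := by linarith
          have hfloor_r : ⌊r⌋₊ = m := by
            rw [Nat.floor_eq_iff hr0.le]
            constructor
            · exact_mod_cast hmr.le
            · push_cast; linarith
          set α' : ℝ := r - (m:ℝ) with hα'
          have hα'0 : 0 < α' := by rw [hα']; linarith
          have hα'1 : α' ≤ 1 := by rw [hα']; linarith
          have hαα' : α ≤ α' := by rw [hα, hα']; linarith
          have hsemi_r : ∀ f : E3 → ℝ, hSemi f r = Hn m α' f := by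
            intro f
            rw [hSemi_eq_Hn f (by rw [hfloor_r]; intro hc; rw [hc] at hmr; exact lt_irrefl _ hmr),
              hfloor_r, ← hα']
          obtain ⟨C1, hC1, h1⟩ := node_bound hr0 m hmr.le
          refine ⟨2 * C1^(1-α/α') * 1^(α/α'), by positivity, fun f hf hp => ?_⟩
          have h1f := h1 f hf hp
          have hbrick := brick3 hf hp m hα0 hαα' hα'1
          have hlam0 : 0 ≤ α/α' := by positivity
          have hlam1 : α/α' ≤ 1 := by
            rw [div_le_one hα'0]; exact hαα'
          have h2f : Hn m α' f ≤ 1 * supN f^(0:ℝ) * hSemi f r^(1:ℝ) := by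
            rw [Real.rpow_zero, Real.rpow_one, hsemi_r f]
            simp
          have key := combine2 (Mn_nonneg m f) (Hn_nonneg m α' f)
            (supN_nonneg f) (hSemi_nonneg f r)
            (by norm_num : (0:ℝ) < 2) hC1 one_pos hlam0 hlam1
            (pA := (r - (m:ℝ))/r) (pB := (m:ℝ)/r) (qA := 0) (qB := 1)
            ?_ ?_ hbrick h1f h2f
          · rw [hsemi_s f]
            have eA : (r - (m:ℝ))/r*(1-α/α') + 0*(α/α') = 1 - s/r := by
              rw [hα, hα']
              field_simp [(sub_pos.mpr hmr).ne']
              ring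
            have eB : (m:ℝ)/r*(1-α/α') + 1*(α/α') = s/r := by
              rw [hα, hα']
              field_simp [(sub_pos.mpr hmr).ne']
              ring
            rw [eA, eB] at key
            exact key
          · have eA : (r - (m:ℝ))/r*(1-α/α') + 0*(α/α') = 1 - s/r := by
              rw [hα, hα']
              field_simp [(sub_pos.mpr hmr).ne']
              ring
            rw [eA]
            linarith
          · have eB : (m:ℝ)/r*(1-α/α') + 1*(α/α') = s/r := by
              rw [hα, hα']
              field_simp [(sub_pos.mpr hmr).ne']
              ring
            rw [eB]
            linarith
end
end

section
/- Let α ∈ C^∞_c(B_1(0)) ⊂ C^∞(ℝ³), k ∈ ℤ³ with |k| = λ₀, μ ≥ 1, and for l ∈ ℤ³ set α_l(v) = α(v − l). Define φ(v,τ) = ∑_{l ∈ 𝒞} α_l(μv) e^{−i(k·l/μ)τ} where 𝒞 ⊂ ℤ³ is a set of lattice points whose translates l + B_1(0) are pairwise disjoint. Then for every m ∈ ℕ the function ∂_τ φ + i(k·v)φ satisfies the spatial estimate [∂_τ φ + i(k·v)φ]_m ≤ C μ^{m−1}, with C depending only on m, λ₀ and α. -/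
open scoped BigOperators

noncomputable section

/-- The embedding of a lattice point `l ∈ ℤ³` in `ℝ³`. -/
def latE (l : Fin 3 → ℤ) : E3 := ∑ i, ((l i : ℝ)) • EuclideanSpace.single i (1 : ℝ)

/-- The modulated phase function `φ(v,τ) = ∑_{l ∈ 𝒞} α(μv - l) e^{-i(k·l/μ)τ}`. -/
def φfun (α : E3 → ℝ) (k : Fin 3 → ℤ) (𝒞 : Set (Fin 3 → ℤ)) (μ : ℝ) (v : E3) (τ : ℝ) : ℂ :=
  ∑' l : 𝒞, (α (μ • v - latE l) : ℂ) *
    Complex.exp (-(Complex.I) * ((∑ i, (k i : ℂ) * ((l : Fin 3 → ℤ) i : ℂ)) / (μ : ℂ)) * (τ : ℂ))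

lemma latE_apply (l : Fin 3 → ℤ) (i : Fin 3) : latE l i = (l i : ℝ) := by
  have : (∑ j, ((l j : ℝ)) • EuclideanSpace.single j (1:ℝ)) i
      = ∑ j, (((l j : ℝ)) • EuclideanSpace.single j (1:ℝ)) i := by
    simp [Pi.single_apply]
  rw [latE, this]
  simp [EuclideanSpace.single_apply]

lemma iter_shift {F : Type*} [NormedAddCommGroup F] [NormedSpace ℝ F] {f : E3 → F}
    (hf : ContDiff ℝ (⊤ : ℕ∞) f) (c : E3) (n : ℕ) :
    ∀ x : E3, iteratedFDeriv ℝ n (fun y => f (y + c)) x = iteratedFDeriv ℝ n f (x + c) := by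
  induction n with
  | zero => intro x; ext u; simp
  | succ n ih =>
    intro x
    ext u
    rw [iteratedFDeriv_succ_apply_left, iteratedFDeriv_succ_apply_left]
    have hfe : iteratedFDeriv ℝ n (fun y => f (y + c)) = fun x => iteratedFDeriv ℝ n f (x + c) :=
      funext ih
    rw [hfe]
    have hd : Differentiable ℝ (iteratedFDeriv ℝ n f) :=
      hf.differentiable_iteratedFDeriv (by exact_mod_cast ENat.coe_lt_top n)
    have h2 : HasFDerivAt (fun y : E3 => iteratedFDeriv ℝ n f (y + c))
        (fderiv ℝ (iteratedFDeriv ℝ n f) (x + c)) x := by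
      have := ((hd (x + c)).hasFDerivAt).comp x ((hasFDerivAt_id x).add_const c)
      exact this
    rw [h2.fderiv]

lemma iter_congr {F : Type*} [NormedAddCommGroup F] [NormedSpace ℝ F] {f g : E3 → F} {v : E3}
    (h : f =ᶠ[nhds v] g) (n : ℕ) : iteratedFDeriv ℝ n f v = iteratedFDeriv ℝ n g v := by
  simp only [← iteratedFDerivWithin_univ]
  exact Filter.EventuallyEq.iteratedFDerivWithin_eq (h.filter_mono nhdsWithin_le_nhds)
    h.self_of_nhds n

lemma bound_exists {f : E3 → ℝ} (hf : ContDiff ℝ (⊤ : ℕ∞) f) (hc : HasCompactSupport f) (n : ℕ) :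
    ∃ M : ℝ, 0 < M ∧ ∀ x, ‖iteratedFDeriv ℝ n f x‖ ≤ M := by
  obtain ⟨CC, hCC⟩ := (hf.continuous_iteratedFDeriv (by exact_mod_cast le_top)).bounded_above_of_compact_support
    (hc.iteratedFDeriv n)
  exact ⟨max CC 1, lt_of_lt_of_le one_pos (le_max_right _ _),
    fun x => (hCC x).trans (le_max_left _ _)⟩

set_option maxHeartbeats 1000000 in
/-- transport cancellation estimate: for `α ∈ C_c^∞(B₁(0))`, `m ∈ ℕ` and
`λ₀ ∈ ℕ`, there is `C = C(m, λ₀, α)` such that for every `k ∈ ℤ³` with `|k| = λ₀`, every family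
`𝒞 ⊂ ℤ³` whose translates `l + B₁(0)` are pairwise disjoint, every `μ ≥ 1`, `τ`, spatial
multiindex `β` of length `m` and `v ∈ ℝ³`,
`[∂_τ φ + i(k·v)φ]_m ≤ C μ^(m-1)` (pointwise bound on the `β`-partial derivative in `v`). -/
theorem transport_phase_estimate (α : E3 → ℝ) (hα : ContDiff ℝ (⊤ : ℕ∞) α)
    (hsupp : tsupport α ⊆ Metric.ball 0 1) (lam0 : ℕ) (m : ℕ) :
    ∃ C : ℝ, 0 < C ∧ ∀ (k : Fin 3 → ℤ), (∑ i, (k i) ^ 2) = (lam0 : ℤ) ^ 2 →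
      ∀ (𝒞 : Set (Fin 3 → ℤ)),
        (∀ l ∈ 𝒞, ∀ l' ∈ 𝒞, l ≠ l' →
          Disjoint (Metric.ball (latE l) 1) (Metric.ball (latE l') 1)) →
      ∀ (μ : ℝ), 1 ≤ μ → ∀ (τ : ℝ) (β : Fin m → Fin 3) (v : E3),
        ‖iteratedFDeriv ℝ m (fun w : E3 =>
            deriv (fun τ' => φfun α k 𝒞 μ w τ') τ +
              Complex.I * (∑ i, (k i : ℂ) * ((w i : ℝ) : ℂ)) * φfun α k 𝒞 μ w τ) v
          (fun j => EuclideanSpace.single (β j) (1 : ℝ))‖ ≤ C * μ ^ ((m : ℝ) - 1) := by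
  have hαc : HasCompactSupport α := by
    apply HasCompactSupport.of_support_subset_isCompact
      (Metric.isCompact_of_isClosed_isBounded Metric.isClosed_closedBall Metric.isBounded_closedBall)
    exact (subset_tsupport α).trans (hsupp.trans Metric.ball_subset_closedBall)
  obtain ⟨r, hr0, hr1, hrs⟩ : ∃ r : ℝ, 0 ≤ r ∧ r < 1 ∧ tsupport α ⊆ Metric.closedBall 0 r := by
    rcases Set.eq_empty_or_nonempty (tsupport α) with h | h
    · exact ⟨0, le_refl _, one_pos, by simp [h]⟩
    · obtain ⟨x₀, hx₀K, hx₀max⟩ := hαc.exists_isMaxOn h continuous_norm.continuousOn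
      refine ⟨‖x₀‖, norm_nonneg _, ?_, fun x hx => ?_⟩
      · have := hsupp hx₀K
        simpa [Metric.mem_ball, dist_zero_right] using this
      · simpa [Metric.mem_closedBall, dist_zero_right] using hx₀max hx
  have hGi : ∀ i : Fin 3, ∃ M : ℝ, 0 < M ∧
      ∀ x, ‖iteratedFDeriv ℝ m (fun x : E3 => x i * α x) x‖ ≤ M := by
    intro i
    apply bound_exists
    · exact ((EuclideanSpace.proj (𝕜 := ℝ) i).contDiff).mul hα
    · exact hαc.mul_left
  choose B hB0 hB using hGi
  have hBsum : 0 ≤ ∑ i, B i := Finset.sum_nonneg fun i _ => (hB0 i).le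
  refine ⟨(lam0 : ℝ) * (∑ i, B i) + 1, by positivity, ?_⟩
  intro k hk 𝒞 hdisj μ hμ τ β v
  set C : ℝ := (lam0 : ℝ) * (∑ i, B i) + 1 with hC
  have hμ0 : (0:ℝ) < μ := lt_of_lt_of_le one_pos hμ
  have hμne : (μ:ℂ) ≠ 0 := by exact_mod_cast hμ0.ne'
  have hkabs : ∀ i, |(k i : ℝ)| ≤ (lam0 : ℝ) := by
    intro i
    have h1 : (k i)^2 ≤ (lam0:ℤ)^2 := by
      rw [← hk]; exact Finset.single_le_sum (fun j _ => sq_nonneg (k j)) (Finset.mem_univ i)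
    have h1' : ((k i:ℝ))^2 ≤ ((lam0:ℝ))^2 := by exact_mod_cast h1
    nlinarith [abs_nonneg ((k i:ℝ)), sq_abs ((k i:ℝ)), Nat.cast_nonneg (α := ℝ) lam0]
  set Gk : E3 → ℝ := fun x => (∑ i, (k i : ℝ) * x i) * α x with hGkdef
  have hGksmooth : ContDiff ℝ (⊤ : ℕ∞) Gk := by
    apply ContDiff.mul _ hα
    exact ContDiff.sum fun i _ => contDiff_const.mul (EuclideanSpace.proj (𝕜 := ℝ) i).contDiff
  have hGkbound : ∀ x, ‖iteratedFDeriv ℝ m Gk x‖ ≤ (lam0:ℝ) * ∑ i, B i := by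
    intro x
    have hGkeq : Gk = fun x => ∑ i,
        (fun (j : Fin 3) (x : E3) => (k j : ℝ) • (x j * α x)) i x := by
      funext y
      simp only [hGkdef, smul_eq_mul, Finset.sum_mul, mul_assoc]
    have hGis : ∀ j : Fin 3, ContDiff ℝ (m : ℕ∞) (fun (x : E3) => x j * α x) := by
      intro j
      exact ((EuclideanSpace.proj (𝕜 := ℝ) j).contDiff.mul hα).of_le (by exact_mod_cast le_top)
    have hsm : ∀ j ∈ Finset.univ, ContDiff ℝ (m : ℕ∞)
        (fun (x : E3) => (k j : ℝ) • (x j * α x)) := by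
      intro j _
      exact (hGis j).const_smul _
    have := congrFun (iteratedFDeriv_sum (𝕜 := ℝ) hsm) x
    rw [hGkeq, this]
    rw [Finset.sum_apply]
    refine (norm_sum_le _ _).trans ?_
    rw [Finset.mul_sum]
    refine Finset.sum_le_sum fun j _ => ?_
    rw [iteratedFDeriv_const_smul_apply' (hGis j).contDiffAt]
    rw [norm_smul]
    exact mul_le_mul (by simpa using hkabs j) (hB j x) (norm_nonneg _) (Nat.cast_nonneg _)
  by_cases hcase : ∃ l ∈ 𝒞, ‖μ • v - latE l‖ < (1 + r)/2
  · -- main case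
    obtain ⟨l, hl𝒞, hlnear⟩ := hcase
    set b : ℂ := -(Complex.I) * ((∑ i, (k i : ℂ) * ((l i : ℤ) : ℂ)) / (μ : ℂ)) with hb
    set eτ : ℂ := Complex.exp (b * (τ:ℂ)) with heτ
    set H : E3 → ℂ := fun w => (Complex.I * eτ * (μ:ℂ)⁻¹) * ((Gk (μ • w - latE l) : ℝ) : ℂ)
      with hH
    have hrad : (0:ℝ) < (1 - r)/(2*μ) := by
      have : (0:ℝ) < 1 - r := by linarith
      positivity
    have hnear : ∀ w ∈ Metric.ball v ((1 - r)/(2*μ)), ‖μ • w - μ • v‖ < (1 - r)/2 := by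
      intro w hw
      rw [← smul_sub, norm_smul, Real.norm_of_nonneg hμ0.le]
      have h' : ‖w - v‖ < (1-r)/(2*μ) := by
        simpa [dist_eq_norm] using hw
      calc μ * ‖w - v‖ < μ * ((1-r)/(2*μ)) := by exact mul_lt_mul_of_pos_left h' hμ0
        _ = (1-r)/2 := by field_simp
    have hFeq : (fun w : E3 =>
            deriv (fun τ' => φfun α k 𝒞 μ w τ') τ +
              Complex.I * (∑ i, (k i : ℂ) * ((w i : ℝ) : ℂ)) * φfun α k 𝒞 μ w τ)
        =ᶠ[nhds v] H := by
      filter_upwards [Metric.ball_mem_nhds v hrad] with w hw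
      have hwl : ‖μ • w - latE l‖ < 1 := by
        have h4 : ‖μ • w - latE l‖ ≤ ‖μ • w - μ • v‖ + ‖μ • v - latE l‖ := by
          simpa [dist_eq_norm] using dist_triangle (μ • w) (μ • v) (latE l)
        have := hnear w hw
        linarith
      have honlyl : ∀ l' ∈ 𝒞, l' ≠ l → α (μ • w - latE l') = 0 := by
        intro l' hl' hne
        apply image_eq_zero_of_notMem_tsupport
        intro hmem
        have h5 : μ • w ∈ Metric.ball (latE l) 1 := by
          simpa [Metric.mem_ball, dist_eq_norm] using hwl
        have h6 : μ • w ∉ Metric.ball (latE l') 1 :=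
          Set.disjoint_right.mp (hdisj l' hl' l hl𝒞 hne) h5
        have h7 : (1:ℝ) ≤ ‖μ • w - latE l'‖ := by
          by_contra h8
          exact h6 (by simpa [Metric.mem_ball, dist_eq_norm] using lt_of_not_ge h8)
        have h9 := hsupp hmem
        rw [Metric.mem_ball, dist_zero_right] at h9
        linarith
      have hφw : ∀ τ' : ℝ, φfun α k 𝒞 μ w τ'
          = (α (μ • w - latE l) : ℂ) * Complex.exp (b * (τ':ℂ)) := by
        intro τ'
        have hvanish : ∀ b' : 𝒞, b' ≠ (⟨l, hl𝒞⟩ : 𝒞) →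
            (α (μ • w - latE (b' : Fin 3 → ℤ)) : ℂ) *
              Complex.exp (-(Complex.I) * ((∑ i, (k i : ℂ) *
                (((b' : Fin 3 → ℤ)) i : ℂ)) / (μ : ℂ)) * (τ' : ℂ)) = 0 := by
          intro b' hb'
          have hne : (b' : Fin 3 → ℤ) ≠ l := fun h => hb' (Subtype.ext h)
          rw [honlyl b' b'.2 hne]
          simp
        rw [φfun, tsum_eq_single (⟨l, hl𝒞⟩ : 𝒞) hvanish]
      have hder : deriv (fun τ' => φfun α k 𝒞 μ w τ') τ
          = (α (μ • w - latE l) : ℂ) * (Complex.exp (b * (τ:ℂ)) * b) := by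
        have hfun : (fun τ' : ℝ => φfun α k 𝒞 μ w τ')
            = fun τ' : ℝ => (α (μ • w - latE l) : ℂ) * Complex.exp (b * (τ':ℂ)) :=
          funext hφw
        rw [hfun]
        have h1 : HasDerivAt (fun τ' : ℝ => b * (τ' : ℂ)) b τ := by
          simpa using (Complex.ofRealCLM.hasDerivAt (x := τ)).const_mul b
        exact ((h1.cexp).const_mul _).deriv
      simp only [hder, hφw τ, hH]
      have hxi : ∀ i, ((μ • w - latE l : E3) i) = μ * w i - (l i : ℝ) := by
        intro i
        simp [latE_apply]
      have h2 : ((Gk (μ • w - latE l) : ℝ) : ℂ)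
          = (∑ i, (k i:ℂ) * (((μ • w - latE l : E3) i : ℝ):ℂ)) * ((α (μ • w - latE l) : ℝ):ℂ) := by
        rw [hGkdef]
        push_cast
        ring
      have h3 : ∀ i, (((μ • w - latE l : E3) i : ℝ):ℂ) = (μ:ℂ) * (w i : ℂ) - ((l i : ℤ):ℂ) := by
        intro i
        rw [hxi]
        push_cast
        ring
      have h45 : (∑ i, (k i:ℂ) * (((μ • w - latE l : E3) i : ℝ):ℂ))
          = (μ:ℂ) * (∑ i, (k i : ℂ) * ((w i : ℝ) : ℂ)) - ∑ i, (k i : ℂ) * ((l i : ℤ):ℂ) := by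
        rw [Finset.mul_sum, ← Finset.sum_sub_distrib]
        refine Finset.sum_congr rfl fun i _ => ?_
        rw [h3 i]
        ring
      rw [h2, h45, hb, ← heτ]
      field_simp
      ring
    rw [iter_congr hFeq m]
    -- now bound the derivative of H
    set Sc : E3 →L[ℝ] E3 := μ • ContinuousLinearMap.id ℝ E3 with hSc
    set Lz : ℝ →L[ℝ] ℂ := (Complex.I * eτ * (μ:ℂ)⁻¹) • Complex.ofRealCLM with hLz
    set G1 : E3 → ℝ := fun u => Gk (u + -latE l) with hG1
    have hG1s : ContDiff ℝ (⊤ : ℕ∞) G1 := hGksmooth.comp (contDiff_id.add contDiff_const)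
    have hHeq : H = (fun u => Lz (G1 u)) ∘ Sc := by
      funext w'
      simp only [Function.comp_apply, hG1, hLz, hH, hSc, ContinuousLinearMap.smul_apply,
        ContinuousLinearMap.id_apply, Complex.ofRealCLM_apply, smul_eq_mul, sub_eq_add_neg]
    have hLG : ContDiff ℝ (⊤ : ℕ∞) (fun u => Lz (G1 u)) := Lz.contDiff.comp hG1s
    have e1 : iteratedFDeriv ℝ m H v
        = (iteratedFDeriv ℝ m (fun u => Lz (G1 u)) (Sc v)).compContinuousLinearMap
            (fun _ => Sc) := by
      rw [hHeq]
      exact Sc.iteratedFDeriv_comp_right hLG v (by exact_mod_cast le_top)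
    have e2 : iteratedFDeriv ℝ m (fun u => Lz (G1 u)) (Sc v)
        = Lz.compContinuousMultilinearMap (iteratedFDeriv ℝ m G1 (Sc v)) :=
      Lz.iteratedFDeriv_comp_left (hG1s.contDiffAt (x := Sc v)) (by exact_mod_cast le_top)
    have e3 : ‖iteratedFDeriv ℝ m G1 (Sc v)‖ ≤ (lam0:ℝ) * ∑ i, B i := by
      rw [hG1, iter_shift hGksmooth (-latE l) m (Sc v)]
      exact hGkbound _
    have heτ1 : ‖eτ‖ = 1 := by
      have hsc : (∑ i, (k i:ℂ) * ((l i : ℤ):ℂ)) = ((∑ i, (k i:ℝ) * (l i : ℝ) : ℝ):ℂ) := by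
        push_cast
        rfl
      have hb2 : b * (τ:ℂ) = ((-(( ∑ i, (k i:ℝ) * (l i : ℝ))/μ) * τ : ℝ) : ℂ) * Complex.I := by
        rw [hb, hsc]
        push_cast
        ring
      rw [heτ, hb2, Complex.norm_exp]
      simp
    have h2z : ‖Complex.I * eτ * (μ:ℂ)⁻¹‖ = μ⁻¹ := by
      rw [norm_mul, norm_mul, Complex.norm_I, heτ1]
      simp [abs_of_nonneg hμ0.le]
    have hLznorm : ‖Lz‖ ≤ μ⁻¹ := by
      apply ContinuousLinearMap.opNorm_le_bound _ (inv_nonneg.mpr hμ0.le)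
      intro x
      rw [hLz]
      rw [ContinuousLinearMap.smul_apply, Complex.ofRealCLM_apply, norm_smul, h2z]
      simp [Complex.norm_real]
    have hScnorm : ‖Sc‖ ≤ μ := by
      apply ContinuousLinearMap.opNorm_le_bound _ hμ0.le
      intro x
      rw [hSc, ContinuousLinearMap.smul_apply, ContinuousLinearMap.id_apply, norm_smul,
        Real.norm_of_nonneg hμ0.le]
    have hnormH : ‖iteratedFDeriv ℝ m H v‖ ≤ (μ⁻¹ * ((lam0:ℝ) * ∑ i, B i)) * μ^m := by
      rw [e1, e2]
      refine (ContinuousMultilinearMap.norm_compContinuousLinearMap_le _ _).trans ?_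
      have h5 : ‖Lz.compContinuousMultilinearMap (iteratedFDeriv ℝ m G1 (Sc v))‖
          ≤ μ⁻¹ * ((lam0:ℝ) * ∑ i, B i) := by
        refine (ContinuousLinearMap.norm_compContinuousMultilinearMap_le _ _).trans ?_
        exact mul_le_mul hLznorm e3 (norm_nonneg _) (inv_nonneg.mpr hμ0.le)
      have h6 : (∏ _j : Fin m, ‖Sc‖) ≤ μ ^ m := by
        calc (∏ _j : Fin m, ‖Sc‖) ≤ ∏ _j : Fin m, μ :=
          Finset.prod_le_prod (fun _ _ => norm_nonneg _) (fun _ _ => hScnorm)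
          _ = μ ^ m := by simp
      exact mul_le_mul h5 h6 (Finset.prod_nonneg fun _ _ => norm_nonneg _)
        (by positivity)
    have happ : ‖iteratedFDeriv ℝ m H v (fun j => EuclideanSpace.single (β j) (1:ℝ))‖
        ≤ ‖iteratedFDeriv ℝ m H v‖ := by
      refine (ContinuousMultilinearMap.le_opNorm _ _).trans ?_
      have : (∏ j : Fin m, ‖EuclideanSpace.single (β j) (1:ℝ)‖) = 1 := by
        simp [EuclideanSpace.norm_single]
      rw [this, mul_one]
    refine happ.trans (hnormH.trans ?_)
    have hrw : μ ^ ((m:ℝ) - 1) = μ^m * μ⁻¹ := by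
      rw [Real.rpow_sub hμ0, Real.rpow_natCast, Real.rpow_one, div_eq_mul_inv]
    rw [hrw]
    have h1 : (lam0:ℝ) * ∑ i, B i ≤ C := by rw [hC]; linarith
    have h2 := mul_le_mul_of_nonneg_right
      (mul_le_mul_of_nonneg_left h1 (inv_nonneg.mpr hμ0.le)) (pow_nonneg hμ0.le m)
    calc (μ⁻¹ * ((lam0:ℝ) * ∑ i, B i)) * μ^m ≤ (μ⁻¹ * C) * μ^m := h2
      _ = C * (μ^m * μ⁻¹) := by ring
  · -- degenerate case: F vanishes near v
    push_neg at hcase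
    have hrad : (0:ℝ) < (1 - r)/(2*μ) := by
      have : (0:ℝ) < 1 - r := by linarith
      positivity
    have hFz : (fun w : E3 =>
            deriv (fun τ' => φfun α k 𝒞 μ w τ') τ +
              Complex.I * (∑ i, (k i : ℂ) * ((w i : ℝ) : ℂ)) * φfun α k 𝒞 μ w τ)
        =ᶠ[nhds v] (fun _ => (0:ℂ)) := by
      filter_upwards [Metric.ball_mem_nhds v hrad] with w hw
      have hzero : ∀ l ∈ 𝒞, α (μ • w - latE l) = 0 := by
        intro l hl
        apply image_eq_zero_of_notMem_tsupport
        intro hmem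
        have h1 : ‖μ • w - latE l‖ ≤ r := by
          simpa [Metric.mem_closedBall, dist_zero_right] using hrs hmem
        have h2 : ‖μ • w - μ • v‖ < (1 - r)/2 := by
          rw [← smul_sub, norm_smul, Real.norm_of_nonneg hμ0.le]
          have h' : ‖w - v‖ < (1-r)/(2*μ) := by simpa [dist_eq_norm] using hw
          calc μ * ‖w - v‖ < μ * ((1-r)/(2*μ)) := mul_lt_mul_of_pos_left h' hμ0
            _ = (1-r)/2 := by field_simp
        have h3 : (1+r)/2 ≤ ‖μ • v - latE l‖ := hcase l hl
        have h4 : ‖μ • v - latE l‖ ≤ ‖μ • v - μ • w‖ + ‖μ • w - latE l‖ := by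
          simpa [dist_eq_norm] using dist_triangle (μ • v) (μ • w) (latE l)
        have h5 : ‖μ • v - μ • w‖ = ‖μ • w - μ • v‖ := norm_sub_rev _ _
        linarith
      have hφ0 : ∀ τ' : ℝ, φfun α k 𝒞 μ w τ' = 0 := by
        intro τ'
        rw [φfun]
        convert tsum_zero with l
        rw [hzero l l.2, Complex.ofReal_zero, zero_mul]
      have hfun : (fun τ' : ℝ => φfun α k 𝒞 μ w τ') = fun _ : ℝ => (0:ℂ) := funext hφ0
      rw [hfun, hφ0 τ, deriv_const]
      ring
    rw [iter_congr hFz m]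
    have hz : iteratedFDeriv ℝ m (fun _ : E3 => (0:ℂ)) v = 0 := by
      rw [iteratedFDeriv_zero_fun]
      rfl
    rw [hz]
    have h0C : (0:ℝ) < C := by rw [hC]; positivity
    have h0 : (0:ℝ) ≤ C * μ ^ ((m:ℝ) - 1) :=
      mul_nonneg h0C.le (Real.rpow_nonneg hμ0.le _)
    rw [ContinuousMultilinearMap.zero_apply, norm_zero]
    exact h0
end
end
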